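/- arXiv:1311.2237 — 5 statements merged into one kernel-verified Lean document; each statement's English description precedes it below -/
import Mathlib

section
/- Let β > 0, n ≥ 1, σ₁,…,σ_n ∈ ℝ and x₁,…,x_n ∈ Λ. Then lim_{m→0⁺} E_{m,β}[exp(i Σ_{j=1}^n σ_j φ_{x_j})] = exp(−(β/2) Σ_{i,j=1}^n σ_iσ_j W_Λ(x_i−x_j|0)) if σ₁+⋯+σ_n = 0, and lim_{m→0⁺} E_{m,β}[exp(i Σ_{j=1}^n σ_j φ_{x_j})] = 0 otherwise. -/
open scoped BigOperators
open Filter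

/-- The square lattice torus `Λ` of side `L^R` (`L` odd): integer points `x`
with `max |x₀| |x₁| < L^R / 2`. -/
noncomputable def Lam (L R : ℕ) : Finset (ℤ × ℤ) :=
  ((Finset.Icc (-(L : ℤ) ^ R) ((L : ℤ) ^ R)) ×ˢ
      (Finset.Icc (-(L : ℤ) ^ R) ((L : ℤ) ^ R))).filter
    (fun x => 2 * |x.1| < (L : ℤ) ^ R ∧ 2 * |x.2| < (L : ℤ) ^ R)

/-- Dot product `k·x` where `k = (2π/L^R) n` is a reciprocal lattice vector. -/
noncomputable def kdot (L R : ℕ) (n x : ℤ × ℤ) : ℝ :=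
  (2 * Real.pi / (L : ℝ) ^ R) * ((n.1 : ℝ) * (x.1 : ℝ) + (n.2 : ℝ) * (x.2 : ℝ))

/-- Fourier symbol `Δ̂(k)` of the lattice Laplacian at `k = (2π/L^R) n`. -/
noncomputable def hatDelta (L R : ℕ) (n : ℤ × ℤ) : ℝ :=
  -2 * ((1 - Real.cos (2 * Real.pi * (n.1 : ℝ) / (L : ℝ) ^ R)) +
        (1 - Real.cos (2 * Real.pi * (n.2 : ℝ) / (L : ℝ) ^ R)))

/-- The two-dimensional electrostatic potential `W_Λ(x|0)`. -/
noncomputable def Wfree (L R : ℕ) (x : ℤ × ℤ) : ℝ :=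
  (((Lam L R).card : ℝ))⁻¹ *
    ∑ n ∈ (Lam L R).erase (0, 0),
      ((Complex.exp (Complex.I * (kdot L R n x : ℂ)) - 1) / (-(hatDelta L R n : ℂ))).re

/-- Neutral configurations of `n` charged (`±1`) particles in `Λ`. -/
noncomputable def Omega0 (L R n : ℕ) : Finset (Fin n → ℤ × (ℤ × ℤ)) :=
  (Fintype.piFinset fun _ : Fin n => ({-1, 1} : Finset ℤ) ×ˢ Lam L R).filter
    (fun ω => ∑ j, (ω j).1 = 0)

/-- Coulomb energy `H_Λ(ω)` of a configuration. -/
noncomputable def energy (L R : ℕ) {n : ℕ} (ω : Fin n → ℤ × (ℤ × ℤ)) : ℝ :=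
  ∑ i : Fin n, ∑ j ∈ Finset.Ioi i,
    (((ω i).1 * (ω j).1 : ℤ) : ℝ) * Wfree L R ((ω i).2 - (ω j).2)

/-- Energy `H_Λ(ω ∧ {p₁,p₂})` of a configuration augmented by probes of charge `η`
at `x` and `-η` at `y`. -/
noncomputable def energyP (L R : ℕ) (η : ℝ) (x y : ℤ × ℤ) {n : ℕ}
    (ω : Fin n → ℤ × (ℤ × ℤ)) : ℝ :=
  energy L R ω
    + η * ∑ j, (((ω j).1 : ℤ) : ℝ) * (Wfree L R ((ω j).2 - x) - Wfree L R ((ω j).2 - y))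
    - η ^ 2 * Wfree L R (x - y)

/-- Grand canonical partition function `Z_Λ(β,z)`. -/
noncomputable def Zgc (L R : ℕ) (β z : ℝ) : ℝ :=
  ∑' n : ℕ, (z ^ n / (n.factorial : ℝ)) *
    ∑ ω ∈ Omega0 L R n, Real.exp (-β * energy L R ω)

/-- Partition function `Z^{p₁,p₂}_Λ(β,z)` with two fractional-charge probes. -/
noncomputable def Zprobe (L R : ℕ) (β z η : ℝ) (x y : ℤ × ℤ) : ℝ :=
  ∑' n : ℕ, (z ^ n / (n.factorial : ℝ)) *
    ∑ ω ∈ Omega0 L R n, Real.exp (-β * energyP L R η x y ω)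

/-- The constant `c_E = −(2γ_E + ln 8)/(4π)`. -/
noncomputable def cE : ℝ :=
  -(2 * Real.eulerMascheroniConstant + Real.log 8) / (4 * Real.pi)

/-- Euclidean norm of a point of `ℤ²`. -/
noncomputable def znorm (x : ℤ × ℤ) : ℝ :=
  Real.sqrt ((x.1 : ℝ) ^ 2 + (x.2 : ℝ) ^ 2)

/-- Yukawa potential `W_Λ(x;m)`. -/
noncomputable def Wyuk (L R : ℕ) (m : ℝ) (x : ℤ × ℤ) : ℂ :=
  (((Lam L R).card : ℂ))⁻¹ *
    ∑ n ∈ Lam L R,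
      Complex.exp (Complex.I * (kdot L R n x : ℂ)) / ((m ^ 2 - hatDelta L R n : ℝ) : ℂ)

open MeasureTheory

/-- `μ` is the centered Gaussian measure on fields `φ : ℤ² → ℝ` (supported on `Λ`)
with covariance matrix `β W_Λ(x−y;m)`, characterized through its characteristic
function. -/
def IsGaussianCov (L R : ℕ) (β m : ℝ) (μ : Measure ((ℤ × ℤ) → ℝ)) : Prop :=
  IsProbabilityMeasure μ ∧
  ∀ t : (ℤ × ℤ) → ℝ, (∀ x : ℤ × ℤ, x ∉ Lam L R → t x = 0) →
    (∫ φ : (ℤ × ℤ) → ℝ,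
        Complex.exp (Complex.I * ((∑ x ∈ Lam L R, t x * φ x : ℝ) : ℂ)) ∂μ) =
      Complex.exp
        (-(((β / 2) *
            ∑ x ∈ Lam L R, ∑ y ∈ Lam L R,
              t x * t y * (Wyuk L R m (x - y)).re : ℝ) : ℂ))

/-!
Only the zero mode `k = 0` of `W_Λ(·;m)` is singular as `m → 0`: it contributes the constant
`1/(|Λ| m²)`, which enters the exponent `Σ σᵢσⱼ W_Λ(xᵢ - xⱼ;m)` multiplied by `(Σ σⱼ)²`. The other
modes are continuous down to `m = 0`, where they give `W_Λ(·|0)` plus a constant, again multiplied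
by `(Σ σⱼ)²`. So for neutral charges the characteristic function converges to the Boltzmann
weight, and otherwise its exponent tends to `-∞`.
-/

open scoped Topology

lemma zero_mem_Lam {L : ℕ} (R : ℕ) (hL : 1 < L) : ((0, 0) : ℤ × ℤ) ∈ Lam L R := by
  have h : (0 : ℤ) < (L : ℤ) ^ R := pow_pos (by omega) R
  simp [Lam, h, h.le]

lemma Real.cos_lt_one_of_ne_zero_of_abs_lt {θ : ℝ} (hθ : θ ≠ 0) (hθπ : |θ| < 2 * Real.pi) :
    Real.cos θ < 1 := by
  obtain ⟨h₁, h₂⟩ := abs_lt.mp hθπ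
  exact (Real.cos_le_one θ).lt_of_ne fun h => hθ ((Real.cos_eq_one_iff_of_lt_of_lt h₁ h₂).mp h)

lemma cos_two_pi_mul_div_lt_one {N : ℝ} {a : ℤ} (ha : a ≠ 0) (haN : 2 * |(a : ℝ)| < N) :
    Real.cos (2 * Real.pi * a / N) < 1 := by
  have hN : 0 < N := lt_of_le_of_lt (by positivity) haN
  have hθ : |2 * Real.pi * a / N| = 2 * Real.pi * (|(a : ℝ)| / N) := by
    rw [abs_div, abs_mul, abs_of_pos Real.two_pi_pos, abs_of_pos hN, mul_div_assoc]
  apply Real.cos_lt_one_of_ne_zero_of_abs_lt (by simp [ha, hN.ne', Real.pi_ne_zero])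
  rw [hθ, mul_lt_iff_lt_one_right Real.two_pi_pos, div_lt_one hN]
  linarith [abs_nonneg (a : ℝ)]

lemma hatDelta_neg {L R : ℕ} {k : ℤ × ℤ} (hk : k ∈ (Lam L R).erase (0, 0)) :
    hatDelta L R k < 0 := by
  obtain ⟨hk0, hk⟩ := Finset.mem_erase.mp hk
  obtain ⟨-, h₁, h₂⟩ := Finset.mem_filter.mp hk
  have hcast : ∀ a : ℤ, 2 * |a| < (L : ℤ) ^ R → 2 * |(a : ℝ)| < (L : ℝ) ^ R := fun a ha => by
    exact_mod_cast ha
  have hc₁ := Real.cos_le_one (2 * Real.pi * k.1 / (L : ℝ) ^ R)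
  have hc₂ := Real.cos_le_one (2 * Real.pi * k.2 / (L : ℝ) ^ R)
  have hk' : k.1 ≠ 0 ∨ k.2 ≠ 0 := by
    by_contra! h
    exact hk0 (Prod.ext h.1 h.2)
  rw [hatDelta]
  rcases hk' with h | h
  · linarith [cos_two_pi_mul_div_lt_one h (hcast _ h₁)]
  · linarith [cos_two_pi_mul_div_lt_one h (hcast _ h₂)]

/-- `W_Λ(y;m)` minus its zero mode `1/(|Λ| m²)`. -/
noncomputable def WyukNonzero (L R : ℕ) (m : ℝ) (y : ℤ × ℤ) : ℝ :=
  ((Lam L R).card : ℝ)⁻¹ *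
    ∑ k ∈ (Lam L R).erase (0, 0),
      (Complex.exp (Complex.I * (kdot L R k y : ℂ)) / ((m ^ 2 - hatDelta L R k : ℝ) : ℂ)).re

lemma re_Wyuk {L : ℕ} (R : ℕ) (hL : 1 < L) (m : ℝ) (y : ℤ × ℤ) :
    (Wyuk L R m y).re = ((Lam L R).card : ℝ)⁻¹ * (m ^ 2)⁻¹ + WyukNonzero L R m y := by
  rw [Wyuk, ← Finset.add_sum_erase _ _ (zero_mem_Lam R hL)]
  have hcard : ((Lam L R).card : ℂ)⁻¹ = (((Lam L R).card : ℝ)⁻¹ : ℝ) := by push_cast; rfl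
  have hzero : Complex.exp (Complex.I * (kdot L R (0, 0) y : ℂ)) /
      ((m ^ 2 - hatDelta L R (0, 0) : ℝ) : ℂ) = (((m ^ 2)⁻¹ : ℝ) : ℂ) := by
    simp [kdot, hatDelta]
  rw [hcard, Complex.re_ofReal_mul, hzero, Complex.add_re, Complex.ofReal_re, Complex.re_sum,
    mul_add, WyukNonzero]

lemma continuous_WyukNonzero (L R : ℕ) (y : ℤ × ℤ) :
    Continuous fun m : ℝ => WyukNonzero L R m y := by
  refine continuous_const.mul (continuous_finsetSum _ fun k hk => ?_)
  refine Complex.continuous_re.comp (continuous_const.div (by fun_prop) fun m => ?_)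
  exact Complex.ofReal_ne_zero.mpr (by nlinarith [hatDelta_neg hk, sq_nonneg m])

lemma WyukNonzero_zero (L R : ℕ) (y : ℤ × ℤ) :
    WyukNonzero L R 0 y = Wfree L R y +
      ((Lam L R).card : ℝ)⁻¹ * ∑ k ∈ (Lam L R).erase (0, 0), (-hatDelta L R k)⁻¹ := by
  rw [WyukNonzero, Wfree, ← mul_add, ← Finset.sum_add_distrib]
  refine congrArg _ (Finset.sum_congr rfl fun k _ => ?_)
  have hsplit : ∀ e : ℂ, e / (((0 : ℝ) ^ 2 - hatDelta L R k : ℝ) : ℂ)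
      = (e - 1) / -(hatDelta L R k : ℂ) + (((-hatDelta L R k)⁻¹ : ℝ) : ℂ) := fun e => by
    push_cast
    ring
  rw [hsplit, Complex.add_re, Complex.ofReal_re]

section ChargeDensity

variable {ι α K : Type*} [Fintype ι] [DecidableEq α] [CommSemiring K]

def chargeDensity (x : ι → α) (σ : ι → K) (y : α) : K :=
  ∑ j, if x j = y then σ j else 0

lemma sum_chargeDensity_mul {s : Finset α} {x : ι → α} (hx : ∀ j, x j ∈ s) (σ : ι → K)
    (f : α → K) : ∑ y ∈ s, chargeDensity x σ y * f y = ∑ j, σ j * f (x j) := by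
  simp only [chargeDensity, Finset.sum_mul, ite_mul, zero_mul]
  rw [Finset.sum_comm]
  exact Finset.sum_congr rfl fun j _ => by rw [Finset.sum_ite_eq, if_pos (hx j)]

lemma sum_sum_chargeDensity_mul {s : Finset α} {x : ι → α} (hx : ∀ j, x j ∈ s) (σ : ι → K)
    (W : α → α → K) :
    ∑ y ∈ s, ∑ z ∈ s, chargeDensity x σ y * chargeDensity x σ z * W y z
      = ∑ i, ∑ j, σ i * σ j * W (x i) (x j) := by
  simp only [mul_assoc, ← Finset.mul_sum, sum_chargeDensity_mul hx]

end ChargeDensity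

lemma sum_sum_mul_mul_const {ι K : Type*} [Fintype ι] [CommSemiring K] (σ : ι → K) (c : K) :
    ∑ i, ∑ j, σ i * σ j * c = (∑ j, σ j) ^ 2 * c := by
  rw [sq, Finset.sum_mul_sum, Finset.sum_mul]
  simp only [Finset.sum_mul]

lemma sum_sum_mul_re_Wyuk {L : ℕ} (R : ℕ) (hL : 1 < L) (m : ℝ) {ι : Type*} [Fintype ι]
    (σ : ι → ℝ) (x : ι → ℤ × ℤ) :
    ∑ i, ∑ j, σ i * σ j * (Wyuk L R m (x i - x j)).re
      = (∑ j, σ j) ^ 2 * (((Lam L R).card : ℝ)⁻¹ * (m ^ 2)⁻¹)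
        + ∑ i, ∑ j, σ i * σ j * WyukNonzero L R m (x i - x j) := by
  simp only [re_Wyuk R hL, mul_add, Finset.sum_add_distrib, sum_sum_mul_mul_const]

lemma sum_sum_mul_WyukNonzero_zero (L R : ℕ) {ι : Type*} [Fintype ι] (σ : ι → ℝ)
    (x : ι → ℤ × ℤ) :
    ∑ i, ∑ j, σ i * σ j * WyukNonzero L R 0 (x i - x j)
      = ∑ i, ∑ j, σ i * σ j * Wfree L R (x i - x j)
        + (∑ j, σ j) ^ 2 * (((Lam L R).card : ℝ)⁻¹ *
            ∑ k ∈ (Lam L R).erase (0, 0), (-hatDelta L R k)⁻¹) := by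
  simp only [WyukNonzero_zero, mul_add, Finset.sum_add_distrib, sum_sum_mul_mul_const]

lemma IsGaussianCov.integral_exp_charges {L R : ℕ} {β m : ℝ} {μ : Measure ((ℤ × ℤ) → ℝ)}
    (hμ : IsGaussianCov L R β m μ) {ι : Type*} [Fintype ι] (σ : ι → ℝ) {x : ι → ℤ × ℤ}
    (hx : ∀ j, x j ∈ Lam L R) :
    ∫ φ, Complex.exp (Complex.I * ((∑ j, σ j * φ (x j) : ℝ) : ℂ)) ∂μ =
      Complex.exp (-(((β / 2) * ∑ i, ∑ j, σ i * σ j * (Wyuk L R m (x i - x j)).re : ℝ) : ℂ)) := by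
  classical
  have hsupp : ∀ y, y ∉ Lam L R → chargeDensity x σ y = 0 := fun y hy =>
    Finset.sum_eq_zero fun j _ => if_neg fun h : x j = y => hy (h ▸ hx j)
  simpa only [sum_chargeDensity_mul hx,
    sum_sum_chargeDensity_mul hx σ fun y z => (Wyuk L R m (y - z)).re] using hμ.2 _ hsupp

lemma tendsto_inv_sq_nhdsGT_zero : Tendsto (fun m : ℝ => (m ^ 2)⁻¹) (𝓝[>] 0) atTop := by
  simpa only [Function.comp_def, inv_pow] using
    (tendsto_pow_atTop (α := ℝ) two_ne_zero).comp tendsto_inv_nhdsGT_zero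

lemma tendsto_exp_neg_mul_inv_sq_add {T : ℝ → ℝ} {t a : ℝ} (ha : 0 < a)
    (hT : Tendsto T (𝓝[>] 0) (𝓝 t)) :
    Tendsto (fun m => Real.exp (-(a * (m ^ 2)⁻¹ + T m))) (𝓝[>] 0) (𝓝 0) :=
  Real.tendsto_exp_atBot.comp <| tendsto_neg_atTop_atBot.comp <|
    (tendsto_inv_sq_nhdsGT_zero.const_mul_atTop ha).atTop_add hT

theorem statement5_general (L R : ℕ) (hL : 1 < L)
    (β : ℝ) (hβ : 0 < β)
    (μ : ℝ → Measure ((ℤ × ℤ) → ℝ))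
    (hμ : ∀ m : ℝ, 0 < m → IsGaussianCov L R β m (μ m))
    (n : ℕ) (σ : Fin n → ℝ) (x : Fin n → ℤ × ℤ)
    (hx : ∀ j, x j ∈ Lam L R) :
    ((∑ j, σ j) = 0 →
      Filter.Tendsto
        (fun m : ℝ => ∫ φ : (ℤ × ℤ) → ℝ,
          Complex.exp (Complex.I * ((∑ j, σ j * φ (x j) : ℝ) : ℂ)) ∂(μ m))
        (nhdsWithin 0 (Set.Ioi 0))
        (nhds ((Real.exp (-(β / 2) *
          ∑ i, ∑ j, σ i * σ j * Wfree L R (x i - x j)) : ℝ) : ℂ))) ∧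
    ((∑ j, σ j) ≠ 0 →
      Filter.Tendsto
        (fun m : ℝ => ∫ φ : (ℤ × ℤ) → ℝ,
          Complex.exp (Complex.I * ((∑ j, σ j * φ (x j) : ℝ) : ℂ)) ∂(μ m))
        (nhdsWithin 0 (Set.Ioi 0)) (nhds 0)) := by
  set c : ℝ := ((Lam L R).card : ℝ)⁻¹
  set T : ℝ → ℝ := fun m => ∑ i, ∑ j, σ i * σ j * WyukNonzero L R m (x i - x j)
  have hchar : ∀ m ∈ Set.Ioi (0 : ℝ),
      ∫ φ, Complex.exp (Complex.I * ((∑ j, σ j * φ (x j) : ℝ) : ℂ)) ∂(μ m)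
        = Real.exp (-(β / 2 * ((∑ j, σ j) ^ 2 * (c * (m ^ 2)⁻¹) + T m))) := fun m hm => by
    rw [(hμ m hm).integral_exp_charges σ hx, sum_sum_mul_re_Wyuk R hL, ← Complex.ofReal_neg,
      ← Complex.ofReal_exp]
  have hT : Tendsto T (𝓝[>] 0) (𝓝 (T 0)) :=
    ((continuous_finsetSum _ fun _ _ => continuous_finsetSum _ fun _ _ =>
      continuous_const.mul (continuous_WyukNonzero L R _)).tendsto 0).mono_left nhdsWithin_le_nhds
  refine ⟨fun hneutral => ?_, fun hcharged => ?_⟩ <;>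
    refine (tendsto_congr' (eventually_nhdsWithin_of_forall hchar)).mpr (Tendsto.ofReal ?_)
  · have hT0 : T 0 = ∑ i, ∑ j, σ i * σ j * Wfree L R (x i - x j) := by
      simp only [T, sum_sum_mul_WyukNonzero_zero, hneutral, zero_pow two_ne_zero, zero_mul,
        add_zero]
    rw [hT0] at hT
    simpa only [hneutral, zero_pow two_ne_zero, zero_mul, zero_add, neg_mul, Function.comp_def]
      using (Real.continuous_exp.tendsto _).comp (hT.const_mul (β / 2)).neg
  · have hc : 0 < c :=
      inv_pos.mpr (by exact_mod_cast Finset.card_pos.mpr ⟨_, zero_mem_Lam R hL⟩)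
    refine (tendsto_exp_neg_mul_inv_sq_add (a := β / 2 * ((∑ j, σ j) ^ 2 * c)) (by positivity)
      (hT.const_mul (β / 2))).congr fun m => ?_
    ring_nf

/-- Limit as `m → 0⁺` of Gaussian characteristic functions: it is the
Boltzmann weight of the electrostatic energy for neutral charge assignments, and `0`
for non-neutral ones. -/
theorem statement5 (L R : ℕ) (hLodd : Odd L) (hL : 1 < L) (hR : 1 ≤ R)
    (β : ℝ) (hβ : 0 < β)
    (μ : ℝ → Measure ((ℤ × ℤ) → ℝ))
    (hμ : ∀ m : ℝ, 0 < m → IsGaussianCov L R β m (μ m))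
    (n : ℕ) (hn : 1 ≤ n) (σ : Fin n → ℝ) (x : Fin n → ℤ × ℤ)
    (hx : ∀ j, x j ∈ Lam L R) :
    ((∑ j, σ j) = 0 →
      Filter.Tendsto
        (fun m : ℝ => ∫ φ : (ℤ × ℤ) → ℝ,
          Complex.exp (Complex.I * ((∑ j, σ j * φ (x j) : ℝ) : ℂ)) ∂(μ m))
        (nhdsWithin 0 (Set.Ioi 0))
        (nhds ((Real.exp (-(β / 2) *
          ∑ i, ∑ j, σ i * σ j * Wfree L R (x i - x j)) : ℝ) : ℂ))) ∧
    ((∑ j, σ j) ≠ 0 →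
      Filter.Tendsto
        (fun m : ℝ => ∫ φ : (ℤ × ℤ) → ℝ,
          Complex.exp (Complex.I * ((∑ j, σ j * φ (x j) : ℝ) : ℂ)) ∂(μ m))
        (nhdsWithin 0 (Set.Ioi 0)) (nhds 0)) :=
  statement5_general L R hL β hβ μ hμ n σ x hx
end

section
/- For every β > 0 and z ≥ 0, lim_{m→0⁺} E_{m,β}[exp(2z Σ_{x∈Λ} cos φ_x)] = Z_Λ(β,z) (the sine-Gordon representation of the Coulomb-gas partition function). -/
open scoped BigOperators
open Filter

open MeasureTheory

/-!
Expand `exp (2 z Σₓ cos φₓ)` in powers of `z` and write `(2 Σₓ cos φₓ)ⁿ` as the sum over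
`n`-particle configurations `ω` of `exp (i Σⱼ σⱼ φ(xⱼ))`. The Gaussian characteristic function
turns each term into `exp (-(β/2) Σᵢⱼ σᵢσⱼ W_Λ(xᵢ - xⱼ; m))`. The zero mode of `W_Λ(·; m)` is
`1/(|Λ| m²)`, so this weight is `exp (-β (Σⱼ σⱼ)² / (2 |Λ| m²))` times a factor continuous at
`m = 0`: as `m → 0⁺` non-neutral configurations die out, while for neutral ones the remaining
double sum tends to `2 H_Λ(ω)`. The weights are at most `1` (the covariance is positive), so the
`n`-th term is bounded by `(2 |Λ| |z|)ⁿ / n!` uniformly in `m`, and the limit passes through the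
integral and the series by dominated convergence.
-/

namespace SineGordon

open Finset Topology

lemma sum_sum_eq_two_mul_sum_sum_Ioi {ι : Type*} [Fintype ι] [LinearOrder ι]
    [LocallyFiniteOrderTop ι] [LocallyFiniteOrderBot ι] {M : Type*} [NonAssocSemiring M]
    (f : ι → ι → M) (hdiag : ∀ i, f i i = 0) (hsymm : ∀ i j, f i j = f j i) :
    ∑ i, ∑ j, f i j = 2 * ∑ i, ∑ j ∈ Ioi i, f i j := by
  have hsplit : ∀ i, ∑ j, f i j = ∑ j ∈ Ioi i, f i j + ∑ j ∈ Iio i, f i j := by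
    intro i
    have hIoi : univ.filter (i < ·) = Ioi i := by ext; simp
    have hIic : univ.filter (¬ i < ·) = insert i (Iio i) := by ext; simp [le_iff_lt_or_eq, or_comm]
    rw [← sum_filter_add_sum_filter_not univ (i < ·), hIoi, hIic, sum_insert (by simp), hdiag,
      zero_add]
  have hswap : ∑ i, ∑ j ∈ Iio i, f i j = ∑ i, ∑ j ∈ Ioi i, f i j := by
    rw [sum_comm' (t' := univ) (s' := Ioi) (fun i j => by simp)]
    exact sum_congr rfl fun j _ => sum_congr rfl fun i _ => hsymm i j
  rw [sum_congr rfl fun i _ => hsplit i, sum_add_distrib, hswap, two_mul]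

section Lattice

variable {L R : ℕ}

lemma zero_mem_Lam (hL : 0 < L) : ((0, 0) : ℤ × ℤ) ∈ Lam L R := by
  have : (0 : ℤ) < (L : ℤ) ^ R := pow_pos (by exact_mod_cast hL) R
  simp only [Lam, mem_filter, mem_product, mem_Icc, abs_zero, mul_zero]
  exact ⟨⟨⟨by linarith, this.le⟩, ⟨by linarith, this.le⟩⟩, this, this⟩

lemma card_Lam_pos (hL : 0 < L) : 0 < ((Lam L R).card : ℝ) := by
  exact_mod_cast card_pos.2 ⟨_, zero_mem_Lam hL⟩

lemma cos_two_pi_mul_div_lt_one {k : ℤ} {N : ℝ} (hk : k ≠ 0) (hkN : 2 * |(k : ℝ)| < N) :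
    Real.cos (2 * Real.pi * k / N) < 1 := by
  have hk1 : (1 : ℝ) ≤ |(k : ℝ)| := by exact_mod_cast Int.one_le_abs hk
  have hN : 0 < N := by linarith
  have habs : |2 * Real.pi * k / N| < Real.pi := by
    rw [abs_div, abs_mul, abs_of_pos hN, abs_of_pos Real.two_pi_pos, div_lt_iff₀ hN]
    nlinarith [Real.pi_pos]
  refine lt_of_le_of_ne (Real.cos_le_one _) fun h => ?_
  obtain ⟨hlo, hhi⟩ := abs_lt.1 habs
  rw [Real.cos_eq_one_iff_of_lt_of_lt (by linarith [Real.pi_pos]) (by linarith [Real.pi_pos])] at h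
  simp [hk, hN.ne', Real.pi_ne_zero] at h

lemma hatDelta_zero : hatDelta L R (0, 0) = 0 := by
  simp [hatDelta]

lemma hatDelta_neg {n : ℤ × ℤ} (hn : n ∈ (Lam L R).erase (0, 0)) : hatDelta L R n < 0 := by
  obtain ⟨hn0, hnΛ⟩ := mem_erase.1 hn
  obtain ⟨-, h₁, h₂⟩ := mem_filter.1 hnΛ
  have c₁ := Real.cos_le_one (2 * Real.pi * (n.1 : ℝ) / (L : ℝ) ^ R)
  have c₂ := Real.cos_le_one (2 * Real.pi * (n.2 : ℝ) / (L : ℝ) ^ R)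
  have hlt : ∀ k : ℤ, 2 * |k| < (L : ℤ) ^ R → k ≠ 0 →
      Real.cos (2 * Real.pi * k / (L : ℝ) ^ R) < 1 := fun k hk hk0 =>
    cos_two_pi_mul_div_lt_one hk0 (by exact_mod_cast hk)
  unfold hatDelta
  by_cases h : n.1 = 0
  · have := hlt n.2 h₂ fun h' => hn0 (Prod.ext h h')
    linarith
  · have := hlt n.1 h₁ h
    linarith

end Lattice

section Potential

variable {L R : ℕ}

lemma kdot_zero_left (x : ℤ × ℤ) : kdot L R (0, 0) x = 0 := by
  simp [kdot]

lemma kdot_zero_right (n : ℤ × ℤ) : kdot L R n (0, 0) = 0 := by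
  simp [kdot]

lemma kdot_neg_right (n x : ℤ × ℤ) : kdot L R n (-x) = -kdot L R n x := by
  simp only [kdot, Prod.fst_neg, Prod.snd_neg, Int.cast_neg]
  ring

lemma re_exp_mul_I_div_ofReal (θ r : ℝ) :
    (Complex.exp (Complex.I * θ) / (r : ℂ)).re = Real.cos θ / r := by
  rw [mul_comm, Complex.div_ofReal_re, Complex.exp_ofReal_mul_I_re]

-- `W_Λ(x;m)` without its zero mode `k = 0`, which is `1/(|Λ| m²)`.
noncomputable def Wnz (L R : ℕ) (m : ℝ) (x : ℤ × ℤ) : ℝ :=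
  ((Lam L R).card : ℝ)⁻¹ *
    ∑ n ∈ (Lam L R).erase (0, 0), Real.cos (kdot L R n x) / (m ^ 2 - hatDelta L R n)

lemma re_Wyuk (hL : 0 < L) (m : ℝ) (x : ℤ × ℤ) :
    (Wyuk L R m x).re = ((Lam L R).card : ℝ)⁻¹ * (m ^ 2)⁻¹ + Wnz L R m x := by
  have hcard : (((Lam L R).card : ℂ))⁻¹ = (((Lam L R).card : ℝ)⁻¹ : ℝ) := by push_cast; rfl
  rw [Wyuk, hcard, Complex.re_ofReal_mul, ← add_sum_erase _ _ (zero_mem_Lam hL),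
    Complex.add_re, Complex.re_sum, mul_add, Wnz, re_exp_mul_I_div_ofReal, kdot_zero_left,
    hatDelta_zero, Real.cos_zero, sub_zero, one_div]
  simp only [re_exp_mul_I_div_ofReal]

lemma Wfree_eq_Wnz_sub (x : ℤ × ℤ) : Wfree L R x = Wnz L R 0 x - Wnz L R 0 (0, 0) := by
  rw [Wfree, Wnz, Wnz, ← mul_sub, ← sum_sub_distrib]
  congr 1
  refine sum_congr rfl fun n _ => ?_
  have : -(hatDelta L R n : ℂ) = ((0 ^ 2 - hatDelta L R n : ℝ) : ℂ) := by push_cast; ring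
  rw [this, Complex.div_ofReal_re, Complex.sub_re, mul_comm, Complex.exp_ofReal_mul_I_re,
    Complex.one_re, kdot_zero_right, Real.cos_zero, sub_div]

lemma Wnz_neg (m : ℝ) (x : ℤ × ℤ) : Wnz L R m (-x) = Wnz L R m x := by
  simp only [Wnz, kdot_neg_right, Real.cos_neg]

lemma Wfree_zero : Wfree L R 0 = 0 :=
  (Wfree_eq_Wnz_sub 0).trans (sub_self _)

lemma Wfree_neg (x : ℤ × ℤ) : Wfree L R (-x) = Wfree L R x := by
  rw [Wfree_eq_Wnz_sub, Wfree_eq_Wnz_sub, Wnz_neg]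

lemma tendsto_Wnz (x : ℤ × ℤ) :
    Tendsto (fun m : ℝ => Wnz L R m x) (𝓝 0) (𝓝 (Wnz L R 0 x)) := by
  refine (tendsto_finsetSum _ fun n hn => ?_).const_mul _
  have : (0 : ℝ) ^ 2 - hatDelta L R n ≠ 0 := by linarith [hatDelta_neg hn]
  exact tendsto_const_nhds.div ((continuous_pow 2).tendsto 0 |>.sub tendsto_const_nhds) this

end Potential

section PairForm

variable {ι : Type*} [Fintype ι]

noncomputable def pairForm (W : ℤ × ℤ → ℝ) (ω : ι → ℤ × (ℤ × ℤ)) : ℝ :=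
  ∑ i, ∑ j, ((ω i).1 * (ω j).1 : ℝ) * W ((ω i).2 - (ω j).2)

lemma pairForm_const_add (c : ℝ) (W : ℤ × ℤ → ℝ) (ω : ι → ℤ × (ℤ × ℤ)) :
    pairForm (fun x => c + W x) ω = (∑ j, ((ω j).1 : ℝ)) ^ 2 * c + pairForm W ω := by
  rw [sq, sum_mul_sum]
  simp only [pairForm, mul_add, sum_add_distrib, sum_mul]

lemma tendsto_pairForm {α : Type*} {l : Filter α} {W : α → ℤ × ℤ → ℝ} {W₀ : ℤ × ℤ → ℝ}
    (hW : ∀ x, Tendsto (W · x) l (𝓝 (W₀ x))) (ω : ι → ℤ × (ℤ × ℤ)) :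
    Tendsto (fun a => pairForm (W a) ω) l (𝓝 (pairForm W₀ ω)) :=
  tendsto_finsetSum _ fun _ _ => tendsto_finsetSum _ fun _ _ => (hW _).const_mul _

lemma pairForm_Wfree {L R n : ℕ} (ω : Fin n → ℤ × (ℤ × ℤ)) :
    pairForm (Wfree L R) ω = 2 * energy L R ω := by
  rw [pairForm, sum_sum_eq_two_mul_sum_sum_Ioi _ (fun i => by simp [Wfree_zero])
    fun i j => by rw [← neg_sub, Wfree_neg, mul_comm ((ω i).1 : ℝ)], energy]
  push_cast
  rfl

lemma pairForm_Wnz_zero {L R n : ℕ} {ω : Fin n → ℤ × (ℤ × ℤ)} (hω : ∑ j, (ω j).1 = 0) :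
    pairForm (Wnz L R 0) ω = 2 * energy L R ω := by
  have hσ : ∑ j, ((ω j).1 : ℝ) = 0 := by exact_mod_cast hω
  have hW : Wnz L R 0 = fun x => Wnz L R 0 (0, 0) + Wfree L R x := by
    ext x
    rw [Wfree_eq_Wnz_sub]
    ring
  rw [hW, pairForm_const_add, hσ, pairForm_Wfree]
  ring

end PairForm

section Limit

variable {L R : ℕ}

lemma pairForm_re_Wyuk (hL : 0 < L) (m : ℝ) {ι : Type*} [Fintype ι] (ω : ι → ℤ × (ℤ × ℤ)) :
    pairForm (fun x => (Wyuk L R m x).re) ω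
      = (∑ j, ((ω j).1 : ℝ)) ^ 2 * (((Lam L R).card : ℝ)⁻¹ * (m ^ 2)⁻¹)
        + pairForm (Wnz L R m) ω := by
  simp only [re_Wyuk hL, pairForm_const_add]

lemma tendsto_inv_sq_nhdsGT_zero : Tendsto (fun m : ℝ => (m ^ 2)⁻¹) (𝓝[>] 0) atTop := by
  simpa only [Function.comp_def, inv_pow] using
    (tendsto_pow_atTop (α := ℝ) two_ne_zero).comp tendsto_inv_nhdsGT_zero

lemma tendsto_exp_neg_pairForm_Wyuk (hL : 0 < L) {β : ℝ} (hβ : 0 < β) {n : ℕ}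
    (ω : Fin n → ℤ × (ℤ × ℤ)) :
    Tendsto (fun m => Real.exp (-(β / 2 * pairForm (fun x => (Wyuk L R m x).re) ω))) (𝓝[>] 0)
      (𝓝 (if ∑ j, (ω j).1 = 0 then Real.exp (-β * energy L R ω) else 0)) := by
  have hnz : Tendsto (fun m => pairForm (Wnz L R m) ω) (𝓝[>] 0)
      (𝓝 (pairForm (Wnz L R 0) ω)) :=
    (tendsto_pairForm tendsto_Wnz ω).mono_left nhdsWithin_le_nhds
  simp only [pairForm_re_Wyuk hL]
  split_ifs with hω
  · have hσ : ∑ j, ((ω j).1 : ℝ) = 0 := by exact_mod_cast hω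
    have hlim : -β * energy L R ω = -(β / 2 * pairForm (Wnz L R 0) ω) := by
      rw [pairForm_Wnz_zero hω]
      ring
    simpa only [hσ, hlim, zero_pow two_ne_zero, zero_mul, zero_add] using
      ((hnz.const_mul (β / 2)).neg).rexp
  · have hσ : ∑ j, ((ω j).1 : ℝ) ≠ 0 := by exact_mod_cast hω
    have hq : 0 < (∑ j, ((ω j).1 : ℝ)) ^ 2 * ((Lam L R).card : ℝ)⁻¹ :=
      mul_pos (sq_pos_of_ne_zero hσ) (inv_pos.2 (card_Lam_pos hL))
    have htop := (tendsto_inv_sq_nhdsGT_zero.const_mul_atTop hq).atTop_add hnz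
    refine Real.tendsto_exp_atBot.comp
      (tendsto_neg_atTop_atBot.comp ((htop.const_mul_atTop (half_pos hβ)).congr fun m => ?_))
    ring

end Limit

section Charges

variable {ι : Type*} [Fintype ι]

noncomputable def chargeDensity (ω : ι → ℤ × (ℤ × ℤ)) (x : ℤ × ℤ) : ℝ :=
  ∑ j, if (ω j).2 = x then ((ω j).1 : ℝ) else 0

noncomputable def chargePairing (ω : ι → ℤ × (ℤ × ℤ)) (φ : ℤ × ℤ → ℝ) : ℝ :=
  ∑ j, ((ω j).1 : ℝ) * φ (ω j).2

lemma measurable_chargePairing (ω : ι → ℤ × (ℤ × ℤ)) :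
    Measurable (chargePairing ω) :=
  Finset.measurable_sum _ fun _ _ => (measurable_pi_apply _).const_mul _

lemma chargeDensity_eq_zero {ω : ι → ℤ × (ℤ × ℤ)} {x : ℤ × ℤ} (hx : ∀ j, (ω j).2 ≠ x) :
    chargeDensity ω x = 0 :=
  sum_eq_zero fun j _ => if_neg (hx j)

lemma sum_chargeDensity_mul {s : Finset (ℤ × ℤ)} {ω : ι → ℤ × (ℤ × ℤ)} (hω : ∀ j, (ω j).2 ∈ s)
    (g : ℤ × ℤ → ℝ) : ∑ x ∈ s, chargeDensity ω x * g x = chargePairing ω g := by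
  simp only [chargeDensity, chargePairing, sum_mul, ite_mul, zero_mul]
  rw [sum_comm]
  exact sum_congr rfl fun j _ => by rw [sum_ite_eq, if_pos (hω j)]

lemma sum_sum_chargeDensity_mul {s : Finset (ℤ × ℤ)} {ω : ι → ℤ × (ℤ × ℤ)}
    (hω : ∀ j, (ω j).2 ∈ s) (W : ℤ × ℤ → ℝ) :
    ∑ x ∈ s, ∑ y ∈ s, chargeDensity ω x * chargeDensity ω y * W (x - y) = pairForm W ω := by
  calc _ = ∑ x ∈ s, chargeDensity ω x * chargePairing ω (fun y => W (x - y)) := by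
        simp only [← sum_chargeDensity_mul hω, mul_sum, mul_assoc]
    _ = pairForm W ω := by
        rw [sum_chargeDensity_mul hω]
        simp only [chargePairing, pairForm, mul_sum, mul_assoc]

end Charges

section Gaussian

variable {L R : ℕ} {β m : ℝ} {μ : Measure (ℤ × ℤ → ℝ)}
  {ι : Type*} [Fintype ι] {ω : ι → ℤ × (ℤ × ℤ)}

lemma _root_.IsGaussianCov.integral_exp_I_chargePairing (hμ : IsGaussianCov L R β m μ)
    (hω : ∀ j, (ω j).2 ∈ Lam L R) :
    ∫ φ, Complex.exp (Complex.I * chargePairing ω φ) ∂μ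
      = Complex.exp (-(β / 2 * pairForm (fun x => (Wyuk L R m x).re) ω : ℝ)) := by
  have h := hμ.2 (chargeDensity ω) fun x hx =>
    chargeDensity_eq_zero fun j hj => hx (hj ▸ hω j)
  simpa only [sum_chargeDensity_mul hω, sum_sum_chargeDensity_mul hω
    (fun x => (Wyuk L R m x).re)] using h

lemma _root_.IsGaussianCov.mul_pairForm_nonneg (hμ : IsGaussianCov L R β m μ)
    (hω : ∀ j, (ω j).2 ∈ Lam L R) :
    0 ≤ β / 2 * pairForm (fun x => (Wyuk L R m x).re) ω := by
  have := hμ.1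
  have hle : ‖∫ φ, Complex.exp (Complex.I * chargePairing ω φ) ∂μ‖ ≤ 1 := by
    simpa using norm_integral_le_of_norm_le_const (μ := μ) (C := 1)
      (.of_forall fun φ => (Complex.norm_exp_I_mul_ofReal _).le)
  rw [hμ.integral_exp_I_chargePairing hω, ← Complex.ofReal_neg, Complex.norm_exp_ofReal,
    Real.exp_le_one_iff] at hle
  linarith

end Gaussian

section Expansion

variable {L R : ℕ}

noncomputable def configs (L R n : ℕ) : Finset (Fin n → ℤ × (ℤ × ℤ)) :=
  Fintype.piFinset fun _ => ({-1, 1} : Finset ℤ) ×ˢ Lam L R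

lemma Omega0_eq_filter_configs (n : ℕ) :
    Omega0 L R n = (configs L R n).filter fun ω => ∑ j, (ω j).1 = 0 :=
  rfl

lemma mem_Lam_of_mem_configs {n : ℕ} {ω : Fin n → ℤ × (ℤ × ℤ)} (hω : ω ∈ configs L R n)
    (j : Fin n) : (ω j).2 ∈ Lam L R :=
  (mem_product.1 (Fintype.mem_piFinset.1 hω j)).2

lemma card_configs (n : ℕ) : (configs L R n).card = (2 * (Lam L R).card) ^ n := by
  rw [configs, Fintype.card_piFinset_const, card_product]
  rfl

lemma two_mul_cos_eq_sum_exp (θ : ℝ) :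
    ((2 * Real.cos θ : ℝ) : ℂ)
      = ∑ σ ∈ ({-1, 1} : Finset ℤ), Complex.exp (Complex.I * (σ * θ : ℝ)) := by
  rw [sum_pair (by decide)]
  push_cast
  rw [Complex.two_cos]
  ring_nf

lemma two_mul_sum_cos_pow (n : ℕ) (φ : ℤ × ℤ → ℝ) :
    ((2 * ∑ x ∈ Lam L R, Real.cos (φ x) : ℝ) : ℂ) ^ n
      = ∑ ω ∈ configs L R n, Complex.exp (Complex.I * chargePairing ω φ) := by
  have hbase : ((2 * ∑ x ∈ Lam L R, Real.cos (φ x) : ℝ) : ℂ)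
      = ∑ p ∈ ({-1, 1} : Finset ℤ) ×ˢ Lam L R, Complex.exp (Complex.I * (p.1 * φ p.2 : ℝ)) := by
    rw [mul_sum, Complex.ofReal_sum, sum_product_right]
    exact sum_congr rfl fun x _ => two_mul_cos_eq_sum_exp (φ x)
  rw [hbase, sum_pow']
  refine sum_congr rfl fun ω _ => ?_
  rw [← Complex.exp_sum, chargePairing, Complex.ofReal_sum, mul_sum]

variable {β m : ℝ} {μ : Measure (ℤ × ℤ → ℝ)}

lemma _root_.IsGaussianCov.integral_two_mul_sum_cos_pow (hμ : IsGaussianCov L R β m μ) (n : ℕ) :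
    ∫ φ, (2 * ∑ x ∈ Lam L R, Real.cos (φ x)) ^ n ∂μ
      = ∑ ω ∈ configs L R n, Real.exp (-(β / 2 * pairForm (fun x => (Wyuk L R m x).re) ω)) := by
  have := hμ.1
  have hint : ∀ ω : Fin n → ℤ × (ℤ × ℤ),
      Integrable (fun φ => Complex.exp (Complex.I * chargePairing ω φ)) μ := fun ω =>
    .of_bound (by have := measurable_chargePairing ω; fun_prop) 1
      (.of_forall fun φ => (Complex.norm_exp_I_mul_ofReal _).le)
  apply Complex.ofReal_injective
  rw [← integral_complex_ofReal]
  simp only [Complex.ofReal_pow, two_mul_sum_cos_pow, integral_finsetSum _ fun ω _ => hint ω,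
    Complex.ofReal_sum, Complex.ofReal_exp, Complex.ofReal_neg]
  exact sum_congr rfl fun ω hω =>
    hμ.integral_exp_I_chargePairing (mem_Lam_of_mem_configs hω)

lemma _root_.IsGaussianCov.hasSum_integral_exp (hμ : IsGaussianCov L R β m μ) (z : ℝ) :
    HasSum (fun n => z ^ n / n.factorial *
        ∑ ω ∈ configs L R n, Real.exp (-(β / 2 * pairForm (fun x => (Wyuk L R m x).re) ω)))
      (∫ φ, Real.exp (2 * z * ∑ x ∈ Lam L R, Real.cos (φ x)) ∂μ) := by
  have := hμ.1
  set S : (ℤ × ℤ → ℝ) → ℝ := fun φ => 2 * ∑ x ∈ Lam L R, Real.cos (φ x)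
  have hS : Measurable S := by fun_prop
  have hSle : ∀ φ, |S φ| ≤ 2 * (Lam L R).card := fun φ => by
    simpa [S, abs_mul] using (abs_sum_le_sum_abs _ _).trans
      (sum_le_card_nsmul _ _ 1 fun x _ => Real.abs_cos_le_one (φ x))
  have hterm : ∀ n, ∫ φ, z ^ n / n.factorial * S φ ^ n ∂μ = z ^ n / n.factorial *
      ∑ ω ∈ configs L R n, Real.exp (-(β / 2 * pairForm (fun x => (Wyuk L R m x).re) ω)) :=
    fun n => by rw [integral_const_mul, hμ.integral_two_mul_sum_cos_pow]
  simp only [← hterm]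
  refine hasSum_integral_of_dominated_convergence
    (fun n _ => (|z| * (2 * (Lam L R).card)) ^ n / n.factorial)
    (fun n => ((hS.pow_const n).const_mul _).aestronglyMeasurable)
    (fun n => .of_forall fun φ => ?_) (.of_forall fun _ => Real.summable_pow_div_factorial _)
    (integrable_const _) (.of_forall fun φ => ?_)
  · rw [norm_mul, norm_pow, Real.norm_eq_abs, Real.norm_eq_abs, abs_div, abs_pow, Nat.abs_cast,
      div_mul_eq_mul_div, mul_pow]
    gcongr
    exact hSle φ
  · have h := NormedSpace.expSeries_div_hasSum_exp (z * S φ)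
    have hseries : (fun n => (z * S φ) ^ n / n.factorial)
        = fun n => z ^ n / n.factorial * S φ ^ n := by
      funext n
      rw [mul_pow]
      ring
    have hexp : z * S φ = 2 * z * ∑ x ∈ Lam L R, Real.cos (φ x) := by
      simp only [S]
      ring
    rwa [← Real.exp_eq_exp_ℝ, hseries, hexp] at h

lemma _root_.IsGaussianCov.norm_mul_sum_exp_le (hμ : IsGaussianCov L R β m μ) (z : ℝ) (n : ℕ) :
    ‖z ^ n / n.factorial *
        ∑ ω ∈ configs L R n, Real.exp (-(β / 2 * pairForm (fun x => (Wyuk L R m x).re) ω))‖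
      ≤ (|z| * (2 * (Lam L R).card)) ^ n / n.factorial := by
  have hsum : ∑ ω ∈ configs L R n,
      Real.exp (-(β / 2 * pairForm (fun x => (Wyuk L R m x).re) ω)) ≤ (configs L R n).card := by
    simpa using sum_le_card_nsmul _ _ 1 fun ω hω => Real.exp_le_one_iff.2
      (neg_nonpos.2 (hμ.mul_pairForm_nonneg (mem_Lam_of_mem_configs hω)))
  rw [norm_mul, Real.norm_of_nonneg (sum_nonneg fun _ _ => (Real.exp_pos _).le), norm_div,
    norm_pow, Real.norm_eq_abs, RCLike.norm_natCast]
  calc _ ≤ |z| ^ n / n.factorial * (configs L R n).card := by gcongr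
    _ = _ := by
      rw [card_configs]
      push_cast
      ring

end Expansion

end SineGordon

open SineGordon

theorem statement6_general (L R : ℕ) (hL : 1 < L)
    (β z : ℝ) (hβ : 0 < β)
    (μ : ℝ → Measure ((ℤ × ℤ) → ℝ))
    (hμ : ∀ m : ℝ, 0 < m → IsGaussianCov L R β m (μ m)) :
    Filter.Tendsto
      (fun m : ℝ => ∫ φ : (ℤ × ℤ) → ℝ,
        Real.exp (2 * z * ∑ x ∈ Lam L R, Real.cos (φ x)) ∂(μ m))
      (nhdsWithin 0 (Set.Ioi 0)) (nhds (Zgc L R β z)) := by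
  have hterm (n : ℕ) : Tendsto (fun m => z ^ n / n.factorial *
        ∑ ω ∈ configs L R n, Real.exp (-(β / 2 * pairForm (fun x => (Wyuk L R m x).re) ω)))
      (nhdsWithin 0 (Set.Ioi 0))
      (nhds (z ^ n / n.factorial * ∑ ω ∈ Omega0 L R n, Real.exp (-β * energy L R ω))) := by
    rw [Omega0_eq_filter_configs, Finset.sum_filter]
    exact (tendsto_finsetSum _ fun ω _ =>
      tendsto_exp_neg_pairForm_Wyuk (by omega) hβ ω).const_mul _
  have hbound : ∀ᶠ m in nhdsWithin 0 (Set.Ioi 0), ∀ n : ℕ, ‖z ^ n / n.factorial *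
        ∑ ω ∈ configs L R n, Real.exp (-(β / 2 * pairForm (fun x => (Wyuk L R m x).re) ω))‖
      ≤ (|z| * (2 * (Lam L R).card)) ^ n / n.factorial := by
    filter_upwards [self_mem_nhdsWithin] with m hm
    exact (hμ m hm).norm_mul_sum_exp_le z
  refine (tendsto_tsum_of_dominated_convergence (Real.summable_pow_div_factorial _) hterm
    hbound).congr' ?_
  filter_upwards [self_mem_nhdsWithin] with m hm
  exact ((hμ m hm).hasSum_integral_exp z).tsum_eq

/-- Sine-Gordon representation of the Coulomb gas partition
function: `lim_{m→0⁺} E_{m,β}[exp(2z Σ_{x∈Λ} cos φ_x)] = Z_Λ(β,z)`. -/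
theorem statement6 (L R : ℕ) (hLodd : Odd L) (hL : 1 < L) (hR : 1 ≤ R)
    (β z : ℝ) (hβ : 0 < β) (hz : 0 ≤ z)
    (μ : ℝ → Measure ((ℤ × ℤ) → ℝ))
    (hμ : ∀ m : ℝ, 0 < m → IsGaussianCov L R β m (μ m)) :
    Filter.Tendsto
      (fun m : ℝ => ∫ φ : (ℤ × ℤ) → ℝ,
        Real.exp (2 * z * ∑ x ∈ Lam L R, Real.cos (φ x)) ∂(μ m))
      (nhdsWithin 0 (Set.Ioi 0)) (nhds (Zgc L R β z)) :=
  statement6_general L R hL β z hβ μ hμ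
end

section
/- Let q ∈ (0,1] and define q_j := q/(1 + q(j−1)) for integers j ≥ 1. Then the limit c₀ := lim_{j→∞} (Σ_{k=1}^j q_k − ln(1 + qj)) exists, satisfies 0 ≤ c₀ ≤ q, and for every j ≥ 1 one has |Σ_{k=1}^j q_k − ln(1 + qj) − c₀| ≤ q_j. -/
/-!
Put `a i = q / (1 + q i)`, so that `q_{i+1} = a i` and `1 + a i = (1 + q (i+1)) / (1 + q i)`.
The quantity `∑_{k ≤ j} q_k − log (1 + q j)` is then the partial sum of
`g i = a i − log (1 + a i)`, and `a (i+1) = a i / (1 + a i) ≤ log (1 + a i) ≤ a i` gives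
`0 ≤ g i ≤ a i − a (i+1)`. Hence the partial sums increase, the partial sums plus `a j`
decrease, and since `a j → 0` both converge to a common limit `c₀`, squeezed between them.
-/

open Finset Filter Topology Real

theorem exists_tendsto_sum_range_of_le_sub_succ {g a : ℕ → ℝ} (hg : ∀ i, 0 ≤ g i)
    (hga : ∀ i, g i ≤ a i - a (i + 1)) (ha : Tendsto a atTop (𝓝 0)) :
    ∃ c, Tendsto (fun n ↦ ∑ i ∈ range n, g i) atTop (𝓝 c) ∧
      ∀ n, ∑ i ∈ range n, g i ≤ c ∧ c ≤ ∑ i ∈ range n, g i + a n := by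
  set P : ℕ → ℝ := fun n ↦ ∑ i ∈ range n, g i
  have ha_anti : Antitone a := antitone_nat_of_succ_le fun i ↦ by linarith [hg i, hga i]
  have hP_mono : Monotone P := monotone_nat_of_le_succ fun n ↦ by
    simpa [P, sum_range_succ] using hg n
  have hPa_anti : Antitone (P + a) := antitone_nat_of_succ_le fun n ↦ by
    simp only [Pi.add_apply, P, sum_range_succ]
    linarith [hga n]
  have hP_bdd : BddAbove (Set.range P) := ⟨P 0 + a 0, Set.forall_mem_range.2 fun n ↦
    (le_add_of_nonneg_right (ha_anti.le_of_tendsto ha n)).trans (hPa_anti (Nat.zero_le n))⟩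
  have hP := tendsto_atTop_ciSup hP_mono hP_bdd
  have hPa := hP.add ha
  rw [add_zero] at hPa
  exact ⟨_, hP, fun n ↦ ⟨hP_mono.ge_of_tendsto hP n, hPa_anti.le_of_tendsto hPa n⟩⟩

/-- `separatrix q i` is `q_{i+1}`: the index is shifted to start at `0`. -/
noncomputable def separatrix (q : ℝ) (i : ℕ) : ℝ := q / (1 + q * i)

section separatrix

variable {q : ℝ}

theorem separatrix_nonneg (hq : 0 ≤ q) (i : ℕ) : 0 ≤ separatrix q i := by
  unfold separatrix; positivity

theorem one_add_separatrix (hq : 0 ≤ q) (i : ℕ) :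
    1 + separatrix q i = (1 + q * (i + 1 : ℕ)) / (1 + q * i) := by
  unfold separatrix; field_simp; push_cast; ring

theorem separatrix_succ (hq : 0 ≤ q) (i : ℕ) :
    separatrix q (i + 1) = 1 - (1 + separatrix q i)⁻¹ := by
  rw [one_add_separatrix hq, separatrix, inv_div]; field_simp; push_cast; ring

theorem log_one_add_separatrix_mem_Icc (hq : 0 ≤ q) (i : ℕ) :
    log (1 + separatrix q i) ∈ Set.Icc (separatrix q (i + 1)) (separatrix q i) := by
  have hpos : 0 < 1 + separatrix q i := by linarith [separatrix_nonneg hq i]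
  exact ⟨separatrix_succ hq i ▸ one_sub_inv_le_log_of_pos hpos,
    by linarith [log_le_sub_one_of_pos hpos]⟩

theorem tendsto_separatrix_atTop (hq : 0 < q) : Tendsto (separatrix q) atTop (𝓝 0) :=
  tendsto_const_nhds.div_atTop <| tendsto_atTop_add_const_left _ _ <|
    tendsto_natCast_atTop_atTop.const_mul_atTop hq

theorem sum_Icc_sub_log_eq_sum_range (hq : 0 ≤ q) (j : ℕ) :
    ∑ k ∈ Icc 1 j, q / (1 + q * ((k : ℝ) - 1)) - log (1 + q * j) =
      ∑ i ∈ range j, (separatrix q i - log (1 + separatrix q i)) := by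
  have h_sum : ∑ k ∈ Icc 1 j, q / (1 + q * ((k : ℝ) - 1)) = ∑ i ∈ range j, separatrix q i := by
    induction j with
    | zero => simp
    | succ n ih => rw [sum_Icc_succ_top (by omega), ih, sum_range_succ]; simp [separatrix]
  have h_log : log (1 + q * j) = ∑ i ∈ range j, log (1 + separatrix q i) := by
    have := sum_range_sub (fun i : ℕ ↦ log (1 + q * i)) j
    simp only [Nat.cast_zero, mul_zero, add_zero, log_one, sub_zero] at this
    rw [← this]
    refine sum_congr rfl fun i _ ↦ ?_
    rw [one_add_separatrix hq, log_div (by positivity) (by positivity)]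
  rw [h_sum, h_log, sum_sub_distrib]

end separatrix

theorem statement12_general (q : ℝ) (hq0 : 0 < q) :
    ∃ c₀ : ℝ,
      Filter.Tendsto
        (fun j : ℕ =>
          (∑ k ∈ Finset.Icc 1 j, q / (1 + q * ((k : ℝ) - 1))) - Real.log (1 + q * j))
        Filter.atTop (nhds c₀) ∧
      0 ≤ c₀ ∧ c₀ ≤ q ∧
      ∀ j : ℕ, 1 ≤ j →
        |(∑ k ∈ Finset.Icc 1 j, q / (1 + q * ((k : ℝ) - 1))) - Real.log (1 + q * j) - c₀|
          ≤ q / (1 + q * ((j : ℝ) - 1)) := by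
  have hq := hq0.le
  obtain ⟨c, hc, hbound⟩ := exists_tendsto_sum_range_of_le_sub_succ
    (g := fun i ↦ separatrix q i - log (1 + separatrix q i))
    (fun i ↦ sub_nonneg.2 (log_one_add_separatrix_mem_Icc hq i).2)
    (fun i ↦ sub_le_sub_left (log_one_add_separatrix_mem_Icc hq i).1 _)
    (tendsto_separatrix_atTop hq0)
  simp only [← sum_Icc_sub_log_eq_sum_range hq] at hc hbound
  refine ⟨c, hc, by simpa using (hbound 0).1, by simpa [separatrix] using (hbound 0).2,
    fun j hj ↦ ?_⟩
  obtain ⟨h_le, h_ge⟩ := hbound j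
  have h_sep_le : separatrix q j ≤ q / (1 + q * ((j : ℝ) - 1)) := by
    have : (1 : ℝ) ≤ j := by exact_mod_cast hj
    unfold separatrix
    gcongr
    nlinarith
  rw [abs_sub_le_iff]
  constructor <;> linarith [separatrix_nonneg hq j]

/-- For `q ∈ (0,1]` and `q_j = q/(1+q(j−1))`, the limit
`c₀ = lim_j (Σ_{k=1}^j q_k − ln(1+qj))` exists, lies in `[0,q]`, and the speed of
convergence is bounded by `q_j`. -/
theorem statement12 (q : ℝ) (hq0 : 0 < q) (hq1 : q ≤ 1) :
    ∃ c₀ : ℝ,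
      Filter.Tendsto
        (fun j : ℕ =>
          (∑ k ∈ Finset.Icc 1 j, q / (1 + q * ((k : ℝ) - 1))) - Real.log (1 + q * j))
        Filter.atTop (nhds c₀) ∧
      0 ≤ c₀ ∧ c₀ ≤ q ∧
      ∀ j : ℕ, 1 ≤ j →
        |(∑ k ∈ Finset.Icc 1 j, q / (1 + q * ((k : ℝ) - 1))) - Real.log (1 + q * j) - c₀|
          ≤ q / (1 + q * ((j : ℝ) - 1)) :=
  statement12_general q hq0
end

section
/- Let L ≥ 2, C ≥ 0, τ ≥ 0 and q₁ ∈ (0,1], and set q_j := q₁/(1 + q₁(j−1)). There exists a constant C′ > 0, depending only on L, such that every real sequence (m_j)_{j≥1} satisfying |m_j| ≤ C(q_j L^{−j/4} + τ q₁ (1 + q₁(j−1))^{−3/2}) for all j ≥ 1 is absolutely summable, and its sum c satisfies |Σ_{k=1}^j m_k − c| ≤ C′ C (q₁ + τ)/√(1 + q₁(j−1)) for every j ≥ 1. -/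
/-!
With `h n = 1 / √(1 + q₁ n)` and `ρ = L^(-1/4) < 1`, the bound on `m (k + j + 1)` splits into
`q₁ h j ρ^k`, a geometric series in `k`, and `4 τ (h (k + j) - h (k + j + 1))`, a telescoping
series: the estimate `q x^(-3/2) ≤ 4 (x^(-1/2) - (x + q)^(-1/2))` for `q ≤ x` is the discrete
form of `(x^(-1/2))' = -x^(-3/2) / 2`. Both series sum to multiples of `h j`, and this bounds
the tail of `∑ m`.
-/

open Finset Filter Topology

theorem abs_sum_range_sub_tsum_le {f g : ℕ → ℝ} {a : ℝ} {j : ℕ} (hg : HasSum g a)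
    (hfg : ∀ k, |f (k + j)| ≤ g k) : |∑ k ∈ range j, f k - ∑' k, f k| ≤ a := by
  have hf : Summable f := (summable_nat_add_iff j).1 (hg.summable.of_norm_bounded hfg)
  rw [← hf.sum_add_tsum_nat_add j, sub_add_cancel_left, abs_neg]
  exact tsum_of_norm_bounded (f := fun k ↦ f (k + j)) hg hfg

theorem Antitone.hasSum_sub_succ_nat_add {f : ℕ → ℝ} {l : ℝ} (hf : Antitone f)
    (hl : Tendsto f atTop (𝓝 l)) (j : ℕ) :
    HasSum (fun k ↦ f (k + j) - f (k + j + 1)) (f j - l) := by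
  rw [hasSum_iff_tendsto_nat_of_nonneg (fun k ↦ sub_nonneg.2 (hf (k + j).le_succ))]
  have htelescope := sum_range_sub' (fun k ↦ f (k + j))
  simp only [add_right_comm _ 1 j, zero_add] at htelescope
  simp only [htelescope]
  exact tendsto_const_nhds.sub (hl.comp (tendsto_add_atTop_nat j))

theorem Real.rpow_neg_three_halves {x : ℝ} (hx : 0 ≤ x) :
    x ^ (-(3 : ℝ) / 2) = 1 / √x ^ 3 := by
  rw [Real.sqrt_eq_rpow, ← Real.rpow_natCast, ← Real.rpow_mul hx, one_div, ← Real.rpow_neg hx]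
  norm_num

theorem mul_rpow_neg_three_halves_le {x q : ℝ} (hx : 0 < x) (hq : 0 ≤ q) (hqx : q ≤ x) :
    q * x ^ (-(3 : ℝ) / 2) ≤ 4 * (1 / √x - 1 / √(x + q)) := by
  rw [Real.rpow_neg_three_halves hx.le]
  set s := √x
  set t := √(x + q)
  have hs : 0 < s := Real.sqrt_pos.2 hx
  have hst : s ≤ t := Real.sqrt_le_sqrt (by linarith)
  have hs2 : s ^ 2 = x := Real.sq_sqrt hx.le
  have ht2 : t ^ 2 = x + q := Real.sq_sqrt (by linarith)
  have ht : t * (t + s) ≤ 4 * s ^ 2 := by nlinarith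
  rw [div_sub_div _ _ hs.ne' (hs.trans_le hst).ne', mul_one_div, ← mul_div_assoc,
    div_le_div_iff₀ (by positivity) (by positivity)]
  nlinarith [mul_nonneg (mul_nonneg (sub_nonneg.2 hst) hs.le) (sub_nonneg.2 ht)]

/-- `separatrixWeight q₁ n = √(q_{n+1} / q₁)` along the discrete separatrix
`q_j = q₁ / (1 + q₁ (j - 1))`. -/
noncomputable def separatrixWeight (q : ℝ) (n : ℕ) : ℝ := 1 / √(1 + q * n)

section SeparatrixWeight

variable {q : ℝ}

theorem one_le_one_add_mul_natCast (hq : 0 ≤ q) (n : ℕ) : 1 ≤ 1 + q * n := by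
  have : 0 ≤ q * n := by positivity
  linarith

theorem separatrixWeight_nonneg (q : ℝ) (n : ℕ) : 0 ≤ separatrixWeight q n := by
  rw [separatrixWeight]
  positivity

theorem separatrixWeight_le_one (hq : 0 ≤ q) (n : ℕ) : separatrixWeight q n ≤ 1 := by
  rw [separatrixWeight, one_div]
  exact inv_le_one_of_one_le₀ (Real.one_le_sqrt.2 (one_le_one_add_mul_natCast hq n))

theorem separatrixWeight_antitone (hq : 0 ≤ q) : Antitone (separatrixWeight q) := by
  intro a b hab
  apply one_div_le_one_div_of_le (Real.sqrt_pos.2 (by linarith [one_le_one_add_mul_natCast hq a]))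
  gcongr

theorem tendsto_separatrixWeight_atTop (hq : 0 < q) :
    Tendsto (separatrixWeight q) atTop (𝓝 0) := by
  unfold separatrixWeight
  simp only [one_div]
  refine tendsto_inv_atTop_zero.comp (Real.tendsto_sqrt_atTop.comp ?_)
  exact tendsto_atTop_add_const_left _ 1 (tendsto_natCast_atTop_atTop.const_mul_atTop hq)

theorem div_one_add_mul_le_mul_separatrixWeight (hq : 0 ≤ q) (n : ℕ) :
    q / (1 + q * n) ≤ q * separatrixWeight q n := by
  have hx := one_le_one_add_mul_natCast hq n
  have hsq : separatrixWeight q n ^ 2 = 1 / (1 + q * n) := by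
    rw [separatrixWeight, div_pow, one_pow, Real.sq_sqrt (by linarith)]
  have hw := separatrixWeight_le_one hq n
  have hw0 := separatrixWeight_nonneg q n
  rw [div_eq_mul_one_div, ← hsq]
  gcongr
  nlinarith

theorem mul_rpow_neg_three_halves_le_separatrixWeight_sub (hq₀ : 0 ≤ q) (hq₁ : q ≤ 1)
    (n : ℕ) :
    q * (1 + q * n) ^ (-(3 : ℝ) / 2) ≤
      4 * (separatrixWeight q n - separatrixWeight q (n + 1)) := by
  have hx := one_le_one_add_mul_natCast hq₀ n
  have hle := mul_rpow_neg_three_halves_le (by linarith) hq₀ (hq₁.trans hx)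
  rwa [separatrixWeight, separatrixWeight, Nat.cast_succ, mul_add_one, ← add_assoc]

end SeparatrixWeight

theorem abs_le_geometric_add_telescoping {L C τ q : ℝ} {m : ℕ → ℝ} (hL : 1 ≤ L)
    (hC : 0 ≤ C) (hτ : 0 ≤ τ) (hq₀ : 0 ≤ q) (hq₁ : q ≤ 1)
    (hm : ∀ j : ℕ, 1 ≤ j →
      |m j| ≤ C * (q / (1 + q * ((j : ℝ) - 1)) * L ^ (-(j : ℝ) / 4)
        + τ * q * (1 + q * ((j : ℝ) - 1)) ^ (-(3 : ℝ) / 2)))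
    (j k : ℕ) :
    |m (k + j + 1)| ≤ C * (q * separatrixWeight q j * (L ^ (-(1 : ℝ) / 4)) ^ k
      + 4 * τ * (separatrixWeight q (k + j) - separatrixWeight q (k + j + 1))) := by
  have hmn := hm (k + j + 1) (Nat.le_add_left 1 _)
  rw [Nat.cast_succ, add_sub_cancel_right] at hmn
  have hgeom : L ^ (-((k + j : ℕ) + 1 : ℝ) / 4) ≤ (L ^ (-(1 : ℝ) / 4)) ^ k := by
    rw [show -((k + j : ℕ) + 1 : ℝ) / 4 = -(1 : ℝ) / 4 * (k + j + 1 : ℕ) by push_cast; ring,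
      Real.rpow_mul_natCast (by linarith)]
    exact pow_le_pow_of_le_one (by positivity)
      (Real.rpow_le_one_of_one_le_of_nonpos hL (by norm_num)) (by omega)
  have hdecay : q / (1 + q * (k + j : ℕ)) ≤ q * separatrixWeight q j :=
    (div_one_add_mul_le_mul_separatrixWeight hq₀ _).trans
      (mul_le_mul_of_nonneg_left (separatrixWeight_antitone hq₀ (Nat.le_add_left j k)) hq₀)
  have hpower := mul_rpow_neg_three_halves_le_separatrixWeight_sub hq₀ hq₁ (k + j)
  refine hmn.trans (mul_le_mul_of_nonneg_left ?_ hC)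
  rw [mul_assoc τ, mul_assoc 4, mul_left_comm 4]
  gcongr ?_ + τ * ?_
  exact mul_le_mul hdecay hgeom (by positivity)
    (mul_nonneg hq₀ (separatrixWeight_nonneg q j))

/-- Summability of error sequences along the discrete separatrix: if
`|m_j| ≤ C(q_j L^{−j/4} + τ q₁ (1+q₁(j−1))^{−3/2})` then `(m_j)_{j≥1}` is absolutely
summable and its partial sums converge to its sum at speed
`C′ C (q₁+τ)/√(1+q₁(j−1))`, with `C′` depending only on `L`. -/
theorem statement13 (L : ℝ) (hL : 2 ≤ L) :
    ∃ C' : ℝ, 0 < C' ∧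
      ∀ C τ q₁ : ℝ, 0 ≤ C → 0 ≤ τ → 0 < q₁ → q₁ ≤ 1 →
        ∀ m : ℕ → ℝ,
          (∀ j : ℕ, 1 ≤ j →
            |m j| ≤ C * (q₁ / (1 + q₁ * ((j : ℝ) - 1)) * L ^ (-(j : ℝ) / 4)
              + τ * q₁ * (1 + q₁ * ((j : ℝ) - 1)) ^ (-(3 : ℝ) / 2))) →
          Summable (fun j : ℕ => |m (j + 1)|) ∧
          ∀ j : ℕ, 1 ≤ j →
            |(∑ k ∈ Finset.Icc 1 j, m k) - ∑' k : ℕ, m (k + 1)|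
              ≤ C' * C * (q₁ + τ) / Real.sqrt (1 + q₁ * ((j : ℝ) - 1)) := by
  set ρ := L ^ (-(1 : ℝ) / 4)
  have hρ₀ : 0 ≤ ρ := by positivity
  have hρ₁ : ρ < 1 := Real.rpow_lt_one_of_one_lt_of_neg (by linarith) (by norm_num)
  have hA : 0 ≤ (1 - ρ)⁻¹ := inv_nonneg.2 (sub_nonneg.2 hρ₁.le)
  refine ⟨(1 - ρ)⁻¹ + 4, by positivity, ?_⟩
  intro C τ q₁ hC hτ hq₀ hq₁ m hm
  set h := separatrixWeight q₁
  have hbound := abs_le_geometric_add_telescoping (by linarith) hC hτ hq₀.le hq₁ hm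
  have htail (j : ℕ) :
      HasSum (fun k ↦ C * (q₁ * h j * ρ ^ k + 4 * τ * (h (k + j) - h (k + j + 1))))
        (C * (q₁ * h j * (1 - ρ)⁻¹ + 4 * τ * h j)) := by
    simpa using (((hasSum_geometric_of_lt_one hρ₀ hρ₁).mul_left (q₁ * h j)).add
      (((separatrixWeight_antitone hq₀.le).hasSum_sub_succ_nat_add
        (tendsto_separatrixWeight_atTop hq₀) j).mul_left (4 * τ))).mul_left C
  refine ⟨.of_nonneg_of_le (fun _ ↦ abs_nonneg _) (hbound 0) (htail 0).summable,
    fun j hj ↦ ?_⟩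
  obtain ⟨n, rfl⟩ := Nat.exists_eq_add_of_le' hj
  have hh₀ : 0 ≤ h (n + 1) := separatrixWeight_nonneg q₁ (n + 1)
  have hIcc : ∑ k ∈ Icc 1 (n + 1), m k = ∑ k ∈ range (n + 1), m (k + 1) := by
    rw [range_eq_Ico, sum_Ico_add', ← Ico_add_one_right_eq_Icc]
  rw [hIcc]
  calc _ ≤ C * (q₁ * h (n + 1) * (1 - ρ)⁻¹ + 4 * τ * h (n + 1)) :=
        abs_sum_range_sub_tsum_le (htail _) (hbound _)
    _ ≤ ((1 - ρ)⁻¹ + 4) * C * (q₁ + τ) * h (n + 1) := by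
      nlinarith [mul_nonneg (mul_nonneg hC hh₀) (mul_nonneg hA hτ),
        mul_nonneg (mul_nonneg hC hh₀) hq₀.le]
    _ ≤ ((1 - ρ)⁻¹ + 4) * C * (q₁ + τ) * h n :=
      mul_le_mul_of_nonneg_left (separatrixWeight_antitone hq₀.le n.le_succ) (by positivity)
    _ = _ := by rw [Nat.cast_succ, add_sub_cancel_right, div_eq_mul_one_div]; rfl
end

section
/- There exist an integer j₀ ≥ 1 and a constant C₀ > 0, depending only on η, L and C (and not on q₁ nor on the particular sequences), such that for all data as in the context: for m = 1,2 the limits Q̄_{1,m} := lim_{j→∞} Q(j,j₀)_{1,m} exist; the series Σ_{d≥j₀} ℓ_{j₀}⋯ℓ_{d−1} m_{−,d} converges absolutely; |Q̄_{1,1} − 1| ≤ C₀ √q₁ and |Q̄_{1,2} − Σ_{d≥j₀} ℓ_{j₀}⋯ℓ_{d−1} m_{−,d}| ≤ C₀ q₁^{3/2}; and for every j ≥ j₀: |Q(j,j₀)_{1,m} − Q̄_{1,m}| ≤ C₀ q_j for m = 1,2, |Q(j,j₀)_{2,1}| ≤ C₀ q_j, and |Q(j,j₀)_{2,2} − ℓ_{j₀}⋯ℓ_j|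 ≤ C₀ q₁ q_j. -/
/-- The single-step matrix `M_n` with rows `(1, m_{−,n})` and `(m_{+,n}, ℓ_n)`. -/
def Mmat (ℓ mp mm : ℕ → ℝ) (n : ℕ) : Matrix (Fin 2) (Fin 2) ℝ :=
  !![1, mm n; mp n, ℓ n]

/-- The ordered product `Q(f,i) = M_f M_{f−1} ⋯ M_i` (the identity when `f < i`). -/
def Qmat (ℓ mp mm : ℕ → ℝ) (f i : ℕ) : Matrix (Fin 2) (Fin 2) ℝ :=
  (((List.range (f + 1 - i)).map fun t => Mmat ℓ mp mm (f - t)).prod)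

/-!
Fix `j₀ = a` and follow one column `(x_n, y_n)` of `Q(a + n, a)`; it satisfies
`x_{n+1} = x_n + m_{−,a+n+1} y_n` and `y_{n+1} = m_{+,a+n+1} x_n + ℓ_{a+n+1} y_n`.
For `a` large, `|ℓ_j| ≤ θ < 1` and `θ q_j ≤ μ q_{j+1}` with `μ < 1` for all `j ≥ a`. As long as the
first row stays bounded, the second row is then a contraction driven by a source of size
`O(q_{n+1})`, so it stays `O(q_n)`; in the second column this applies to `y_n − ℓ_a ⋯ ℓ_{a+n}`.
Conversely, the first-row increments are then `O(q_n q_{n+1})` (plus a geometric term `θ^n q_{n+1}`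
in the second column), and since `q_j q_{j+1} = q_j − q_{j+1}` telescopes, the first row converges
with tail `O(q_n)` and stays bounded. The two bounds are proved by a joint induction. The same
telescoping compares the second-column limit with `∑_d ℓ_a ⋯ ℓ_{a+d−1} m_{−,a+d}` up to `O(q_a²)`.
-/

namespace ChargeFlow

open Filter Finset Topology

section Sequences

variable {q m y : ℕ → ℝ} {C G K θ : ℝ}

lemma exists_tendsto_of_sum_dist_le {α : Type*} [PseudoMetricSpace α] [CompleteSpace α]
    {x : ℕ → α} {E : ℕ → ℝ} (h : ∀ n N, ∑ k ∈ range N, dist (x (n + k)) (x (n + k + 1)) ≤ E n) :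
    ∃ X, Tendsto x atTop (𝓝 X) ∧ ∀ n, dist (x n) X ≤ E n := by
  have hsum : Summable fun k => dist (x k) (x (k + 1)) :=
    summable_of_sum_range_le (fun _ => dist_nonneg) fun N => by simpa using h 0 N
  obtain ⟨X, hX⟩ := cauchySeq_tendsto_of_complete (cauchySeq_of_summable_dist hsum)
  exact ⟨X, hX, fun n => (dist_le_tsum_of_dist_le_of_tendsto _ (fun _ => le_rfl) hsum hX n).trans
    (Real.tsum_le_of_sum_range_le (fun _ => dist_nonneg) (h n))⟩

lemma antitone_of_mul_succ_le_sub (hq : ∀ n, 0 ≤ q n)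
    (htel : ∀ n, q n * q (n + 1) ≤ q n - q (n + 1)) : Antitone q :=
  antitone_nat_of_succ_le fun n => by linarith [htel n, mul_nonneg (hq n) (hq (n + 1))]

section RowSums

variable (hq : ∀ n, 0 ≤ q n) (htel : ∀ n, q n * q (n + 1) ≤ q n - q (n + 1))
  (hθ0 : 0 ≤ θ) (hθ1 : θ < 1) (hC : 0 ≤ C) (hG : 0 ≤ G) (hK : 0 ≤ K)
  (hm : ∀ n, |m n| ≤ C * q n)
include hq htel hθ0 hθ1 hC hG hK hm

lemma sum_range_abs_mul_le (n N : ℕ)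
    (hy : ∀ k < N, |y (n + k)| ≤ G * θ ^ (n + k) + K * q (n + k)) :
    ∑ k ∈ range N, |m (n + k + 1) * y (n + k)| ≤ C * (G / (1 - θ) + K) * q n := by
  have hanti := antitone_of_mul_succ_le_sub hq htel
  have hterm : ∀ k < N, |m (n + k + 1) * y (n + k)| ≤
      C * G * q n * θ ^ k + C * K * (q (n + k) - q (n + k + 1)) := by
    intro k hk
    have hqn : q (n + k + 1) ≤ q n := hanti (by omega)
    have hθk : θ ^ (n + k) ≤ θ ^ k := pow_le_pow_of_le_one hθ0 hθ1.le (by omega)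
    calc |m (n + k + 1) * y (n + k)|
        ≤ C * q (n + k + 1) * (G * θ ^ (n + k) + K * q (n + k)) := by
          rw [abs_mul]
          exact mul_le_mul (hm _) (hy k hk) (abs_nonneg _) (mul_nonneg hC (hq _))
      _ = C * G * q (n + k + 1) * θ ^ (n + k) + C * K * (q (n + k) * q (n + k + 1)) := by ring
      _ ≤ C * G * q n * θ ^ k + C * K * (q (n + k) - q (n + k + 1)) := by
          have hCG := mul_nonneg hC hG
          gcongr ?_ + ?_
          · exact mul_le_mul (mul_le_mul_of_nonneg_left hqn hCG) hθk (by positivity)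
              (mul_nonneg hCG (hq n))
          · exact mul_le_mul_of_nonneg_left (htel _) (mul_nonneg hC hK)
  have hgeom : ∑ k ∈ range N, θ ^ k ≤ 1 / (1 - θ) := by
    have := geom_sum_Ico_le_of_lt_one (m := 0) (n := N) hθ0 hθ1
    rwa [← range_eq_Ico, pow_zero] at this
  calc ∑ k ∈ range N, |m (n + k + 1) * y (n + k)|
      ≤ ∑ k ∈ range N, (C * G * q n * θ ^ k + C * K * (q (n + k) - q (n + k + 1))) :=
        sum_le_sum fun k hk => hterm k (mem_range.mp hk)
    _ = C * G * q n * ∑ k ∈ range N, θ ^ k + C * K * (q n - q (n + N)) := by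
        rw [sum_add_distrib, ← mul_sum, ← mul_sum]
        congr 2
        exact sum_range_sub' (fun k => q (n + k)) N
    _ ≤ C * G * q n * (1 / (1 - θ)) + C * K * q n := by
        have hCK := mul_nonneg hC hK
        have hqN := hq (n + N)
        have hCGq := mul_nonneg (mul_nonneg hC hG) (hq n)
        exact add_le_add (mul_le_mul_of_nonneg_left hgeom hCGq) (by nlinarith)
    _ = C * (G / (1 - θ) + K) * q n := by ring

variable {x : ℕ → ℝ}

lemma abs_sub_le_of_rec (hx : ∀ n, x (n + 1) = x n + m (n + 1) * y n) (N : ℕ)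
    (hy : ∀ k < N, |y k| ≤ G * θ ^ k + K * q k) :
    |x N - x 0| ≤ C * (G / (1 - θ) + K) * q 0 := by
  rw [← sum_range_sub]
  calc |∑ k ∈ range N, (x (k + 1) - x k)| = |∑ k ∈ range N, m (0 + k + 1) * y (0 + k)| := by
        simp only [hx, add_sub_cancel_left, zero_add]
    _ ≤ ∑ k ∈ range N, |m (0 + k + 1) * y (0 + k)| := abs_sum_le_sum_abs _ _
    _ ≤ _ := sum_range_abs_mul_le hq htel hθ0 hθ1 hC hG hK hm 0 N (by simpa using hy)

lemma exists_tendsto_of_rec (hx : ∀ n, x (n + 1) = x n + m (n + 1) * y n)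
    (hy : ∀ k, |y k| ≤ G * θ ^ k + K * q k) :
    ∃ X, Tendsto x atTop (𝓝 X) ∧ ∀ n, |x n - X| ≤ C * (G / (1 - θ) + K) * q n := by
  obtain ⟨X, hX, hdist⟩ := exists_tendsto_of_sum_dist_le (x := x)
    (E := fun n => C * (G / (1 - θ) + K) * q n) fun n N => by
    simpa only [Real.dist_eq, hx, sub_add_cancel_left, abs_neg] using
      sum_range_abs_mul_le hq htel hθ0 hθ1 hC hG hK hm n N fun k _ => hy (n + k)
  exact ⟨X, hX, fun n => by simpa only [Real.dist_eq] using hdist n⟩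

end RowSums

lemma abs_le_of_contraction {e s l : ℕ → ℝ} {c μ : ℝ} (hq : ∀ n, 0 ≤ q n) (hθ0 : 0 ≤ θ)
    (hK : 0 ≤ K) (hl : ∀ n, |l n| ≤ θ) (hqθ : ∀ n, θ * q n ≤ μ * q (n + 1))
    (hcK : c + μ * K ≤ K) (he : ∀ n, e (n + 1) = s n + l (n + 1) * e n)
    (he0 : |e 0| ≤ K * q 0) (hs : ∀ n, (∀ k ≤ n, |e k| ≤ K * q k) → |s n| ≤ c * q (n + 1))
    (n : ℕ) : |e n| ≤ K * q n := by
  suffices ∀ n, ∀ k ≤ n, |e k| ≤ K * q k from this n n le_rfl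
  intro n
  induction n with
  | zero => intro k hk; rwa [Nat.le_zero.mp hk]
  | succ n ih =>
    intro k hk
    rcases Nat.le_succ_iff.mp hk with hk | rfl
    · exact ih k hk
    have hθK : θ * (K * q n) ≤ μ * K * q (n + 1) := by nlinarith [hqθ n]
    calc |e (n + 1)| ≤ |s n| + |l (n + 1)| * |e n| := by
          rw [he, ← abs_mul]; exact abs_add_le _ _
      _ ≤ c * q (n + 1) + θ * (K * q n) := by
          gcongr
          exacts [hs n ih, hl _, ih n le_rfl]
      _ ≤ K * q (n + 1) := by nlinarith [hq (n + 1)]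

lemma abs_prod_range_le {l : ℕ → ℝ} (hl : ∀ n, |l n| ≤ θ) (n : ℕ) :
    |∏ k ∈ range n, l k| ≤ θ ^ n := by
  rw [abs_prod]
  calc ∏ k ∈ range n, |l k| ≤ ∏ _k ∈ range n, θ :=
        prod_le_prod (fun _ _ => abs_nonneg _) fun k _ => hl k
    _ = θ ^ n := by rw [prod_const, card_range]

lemma abs_le_of_abs_sub_prod_le {l y : ℕ → ℝ} (hθ0 : 0 ≤ θ) (hθ1 : θ < 1)
    (hl : ∀ n, |l n| ≤ θ) {k : ℕ} {B : ℝ} (hy : |y k - ∏ i ∈ range (k + 1), l i| ≤ B) :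
    |y k| ≤ θ ^ k + B := by
  have hprod := (abs_prod_range_le hl (k + 1)).trans
    (pow_le_pow_of_le_one hθ0 hθ1.le (Nat.le_succ k))
  have := abs_sub_abs_le_abs_sub (y k) (∏ i ∈ range (k + 1), l i)
  linarith

end Sequences

section Qmat

variable (ℓ mp mm : ℕ → ℝ)

lemma Qmat_succ {f i : ℕ} (h : i ≤ f + 1) :
    Qmat ℓ mp mm (f + 1) i = Mmat ℓ mp mm (f + 1) * Qmat ℓ mp mm f i := by
  rw [Qmat, Qmat, show f + 1 + 1 - i = f + 1 - i + 1 by omega, List.range_succ_eq_map]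
  simp only [List.map_cons, List.map_map, List.prod_cons, Nat.sub_zero]
  congr 2
  ext t
  simp [Nat.succ_sub_succ]

lemma Qmat_self (f : ℕ) : Qmat ℓ mp mm f f = Mmat ℓ mp mm f := by
  rw [Qmat, show f + 1 - f = 1 by omega, List.range_one]
  simp

lemma Qmat_succ_zero_apply (n : ℕ) (c : Fin 2) :
    Qmat ℓ mp mm (n + 1) 0 0 c = Qmat ℓ mp mm n 0 0 c + mm (n + 1) * Qmat ℓ mp mm n 0 1 c := by
  rw [Qmat_succ _ _ _ (Nat.zero_le _), Matrix.mul_apply, Fin.sum_univ_two]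
  simp [Mmat]

lemma Qmat_succ_one_apply (n : ℕ) (c : Fin 2) :
    Qmat ℓ mp mm (n + 1) 0 1 c =
      mp (n + 1) * Qmat ℓ mp mm n 0 0 c + ℓ (n + 1) * Qmat ℓ mp mm n 0 1 c := by
  rw [Qmat_succ _ _ _ (Nat.zero_le _), Matrix.mul_apply, Fin.sum_univ_two]
  simp [Mmat]

lemma Qmat_add_eq_shift (a n : ℕ) :
    Qmat ℓ mp mm (a + n) a =
      Qmat (fun k => ℓ (a + k)) (fun k => mp (a + k)) (fun k => mm (a + k)) n 0 := by
  induction n with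
  | zero => rw [Nat.add_zero, Qmat_self, Qmat_self]; rfl
  | succ n ih =>
    rw [← Nat.add_assoc, Qmat_succ _ _ _ (by omega), Qmat_succ _ _ _ (Nat.zero_le _), ih]
    rfl

end Qmat

/-- Hypotheses on the data shifted by `j₀`: `q n = q_{j₀+n}`, `l n = ℓ_{j₀+n}`,
`p n = m_{+,j₀+n}`, `m n = m_{−,j₀+n}`. -/
structure TailRegime (q l p m : ℕ → ℝ) (C θ μ : ℝ) : Prop where
  q_nonneg : ∀ n, 0 ≤ q n
  q_mul_succ_le : ∀ n, q n * q (n + 1) ≤ q n - q (n + 1)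
  theta_nonneg : 0 ≤ θ
  theta_lt_one : θ < 1
  theta_mul_q_le : ∀ n, θ * q n ≤ μ * q (n + 1)
  C_nonneg : 0 ≤ C
  abs_l_le : ∀ n, |l n| ≤ θ
  abs_p_le : ∀ n, |p n| ≤ C * q n
  abs_m_le : ∀ n, |m n| ≤ C * q n

namespace TailRegime

variable {q l p m : ℕ → ℝ} {C θ μ : ℝ} (h : TailRegime q l p m C θ μ)
include h

section Columns

variable {x y : ℕ → ℝ} (hx : ∀ n, x (n + 1) = x n + m (n + 1) * y n)
  (hy : ∀ n, y (n + 1) = p (n + 1) * x n + l (n + 1) * y n)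
include hx hy

lemma abs_le_of_first_column {K : ℝ} (hK : 0 ≤ K) (hK2 : 2 * C + μ * K ≤ K)
    (hsmall : C * K * q 0 ≤ 1) (hx0 : x 0 = 1) (hy0 : |y 0| ≤ K * q 0) (n : ℕ) :
    |y n| ≤ K * q n := by
  refine abs_le_of_contraction h.q_nonneg h.theta_nonneg hK h.abs_l_le h.theta_mul_q_le hK2 hy
    hy0 (fun n hyn => ?_) n
  have hxn : |x n - x 0| ≤ C * (0 / (1 - θ) + K) * q 0 :=
    abs_sub_le_of_rec h.q_nonneg h.q_mul_succ_le h.theta_nonneg h.theta_lt_one h.C_nonneg le_rfl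
      hK h.abs_m_le hx n fun k hk => by simpa using hyn k hk.le
  rw [hx0, zero_div, zero_add] at hxn
  have hx2 : |x n| ≤ 2 := by
    have := abs_sub_abs_le_abs_sub (x n) 1
    rw [abs_one] at this
    linarith
  calc |p (n + 1) * x n| = |p (n + 1)| * |x n| := abs_mul _ _
    _ ≤ C * q (n + 1) * 2 :=
        mul_le_mul (h.abs_p_le _) hx2 (abs_nonneg _) (mul_nonneg h.C_nonneg (h.q_nonneg _))
    _ = 2 * C * q (n + 1) := by ring

lemma abs_sub_prod_le_of_second_column {KD : ℝ} (hKD : 0 ≤ KD)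
    (hKD2 : C * (C + C / (1 - θ) + 1) + μ * KD ≤ KD) (hsmall : C * KD * q 0 ≤ 1)
    (hx0 : |x 0| ≤ C * q 0) (hy0 : y 0 = l 0) (n : ℕ) :
    |y n - ∏ k ∈ range (n + 1), l k| ≤ KD * q 0 * q n := by
  have hq0 := h.q_nonneg 0
  refine abs_le_of_contraction (e := fun n => y n - ∏ k ∈ range (n + 1), l k)
    (s := fun n => p (n + 1) * x n)
    (c := C * (C + C / (1 - θ) + 1) * q 0) h.q_nonneg h.theta_nonneg (mul_nonneg hKD hq0)
    h.abs_l_le h.theta_mul_q_le (by nlinarith) (fun n => by rw [hy, prod_range_succ]; ring)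
    (by simp only [hy0, zero_add, range_one, prod_singleton, sub_self, abs_zero]; positivity)
    (fun n hyn => ?_) n
  have hxn := abs_sub_le_of_rec h.q_nonneg h.q_mul_succ_le h.theta_nonneg h.theta_lt_one
    h.C_nonneg zero_le_one (mul_nonneg hKD hq0) h.abs_m_le hx n
    fun k hk => by
      simpa only [one_mul] using
        abs_le_of_abs_sub_prod_le h.theta_nonneg h.theta_lt_one h.abs_l_le (hyn k hk.le)
  have hxb : |x n| ≤ (C + C / (1 - θ) + 1) * q 0 := by
    have := abs_sub_abs_le_abs_sub (x n) (x 0)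
    have : C * KD * q 0 * q 0 ≤ q 0 := mul_le_of_le_one_left hq0 hsmall
    have : C * (1 / (1 - θ) + KD * q 0) * q 0 = C / (1 - θ) * q 0 + C * KD * q 0 * q 0 := by
      ring
    linarith
  calc |p (n + 1) * x n| = |p (n + 1)| * |x n| := abs_mul _ _
    _ ≤ C * q (n + 1) * ((C + C / (1 - θ) + 1) * q 0) :=
        mul_le_mul (h.abs_p_le _) hxb (abs_nonneg _) (mul_nonneg h.C_nonneg (h.q_nonneg _))
    _ = C * (C + C / (1 - θ) + 1) * q 0 * q (n + 1) := by ring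

end Columns

theorem Qmat_first_column {K : ℝ} (hCK : C ≤ K) (hK2 : 2 * C + μ * K ≤ K)
    (hsmall : C * K * q 0 ≤ 1) :
    ∃ Qb1, Tendsto (fun n => Qmat l p m n 0 0 0) atTop (𝓝 Qb1) ∧ |Qb1 - 1| ≤ C * K * q 0 ∧
      ∀ n, |Qmat l p m n 0 0 0 - Qb1| ≤ C * K * q n ∧ |Qmat l p m n 0 1 0| ≤ K * q n := by
  have hK := h.C_nonneg.trans hCK
  set x := fun n => Qmat l p m n 0 0 0
  set y := fun n => Qmat l p m n 0 1 0
  have hx : ∀ n, x (n + 1) = x n + m (n + 1) * y n := (Qmat_succ_zero_apply l p m · 0)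
  have hx0 : x 0 = 1 := by simp [x, Qmat_self, Mmat]
  have hy0 : y 0 = p 0 := by simp [y, Qmat_self, Mmat]
  have hP := h.abs_le_of_first_column hx (Qmat_succ_one_apply l p m · 0) hK hK2 hsmall hx0
    (hy0 ▸ (h.abs_p_le 0).trans (mul_le_mul_of_nonneg_right hCK (h.q_nonneg 0)))
  obtain ⟨Qb1, hA, hAtail⟩ := exists_tendsto_of_rec (G := 0) h.q_nonneg h.q_mul_succ_le
    h.theta_nonneg h.theta_lt_one h.C_nonneg le_rfl hK h.abs_m_le hx fun k => by simpa using hP k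
  simp only [zero_div, zero_add] at hAtail
  refine ⟨Qb1, hA, ?_, fun n => ⟨hAtail n, hP n⟩⟩
  simpa [abs_sub_comm, hx0] using hAtail 0

lemma summable_abs_prod_mul : Summable fun d => |(∏ k ∈ range d, l k) * m d| := by
  refine Summable.of_nonneg_of_le (fun _ => abs_nonneg _) (fun d => ?_)
    ((summable_geometric_of_lt_one h.theta_nonneg h.theta_lt_one).mul_left (C * q 0))
  rw [abs_mul, mul_comm]
  have hq := antitone_of_mul_succ_le_sub h.q_nonneg h.q_mul_succ_le (Nat.zero_le d)
  exact mul_le_mul ((h.abs_m_le d).trans (mul_le_mul_of_nonneg_left hq h.C_nonneg))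
    (abs_prod_range_le h.abs_l_le d) (abs_nonneg _) (mul_nonneg h.C_nonneg (h.q_nonneg 0))

lemma abs_sub_tsum_le {x y : ℕ → ℝ} {X B : ℝ} (hB : 0 ≤ B)
    (hx : ∀ n, x (n + 1) = x n + m (n + 1) * y n) (hx0 : x 0 = m 0)
    (hX : Tendsto x atTop (𝓝 X)) (hy : ∀ n, |y n - ∏ k ∈ range (n + 1), l k| ≤ B * q n) :
    |X - ∑' d, (∏ k ∈ range d, l k) * m d| ≤ C * B * q 0 := by
  set t := fun d => (∏ k ∈ range d, l k) * m d
  set z := fun n => x n - ∑ d ∈ range (n + 1), t d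
  have hz : ∀ n, z (n + 1) = z n + m (n + 1) * (y n - ∏ k ∈ range (n + 1), l k) := fun n => by
    simp only [z, hx, sum_range_succ _ (n + 1), t]
    ring
  obtain ⟨Z, hZ, hZtail⟩ := exists_tendsto_of_rec (G := 0) h.q_nonneg h.q_mul_succ_le
    h.theta_nonneg h.theta_lt_one h.C_nonneg le_rfl hB h.abs_m_le hz fun k => by simpa using hy k
  have hZX : Z = X - ∑' d, t d := tendsto_nhds_unique hZ <|
    hX.sub ((h.summable_abs_prod_mul.of_abs.hasSum.tendsto_sum_nat).comp (tendsto_add_atTop_nat 1))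
  have hz0 : z 0 = 0 := by simp [z, t, hx0]
  simpa [hz0, hZX, abs_sub_comm] using hZtail 0

theorem Qmat_second_column {KD : ℝ} (hKD : 0 ≤ KD)
    (hKD2 : C * (C + C / (1 - θ) + 1) + μ * KD ≤ KD) (hsmall : C * KD * q 0 ≤ 1) :
    ∃ Qb2, Tendsto (fun n => Qmat l p m n 0 0 1) atTop (𝓝 Qb2) ∧
      Summable (fun d => |(∏ k ∈ range d, l k) * m d|) ∧
      |Qb2 - ∑' d, (∏ k ∈ range d, l k) * m d| ≤ C * (KD * q 0) * q 0 ∧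
      ∀ n, |Qmat l p m n 0 0 1 - Qb2| ≤ C * (1 / (1 - θ) + KD * q 0) * q n ∧
        |Qmat l p m n 0 1 1 - ∏ k ∈ range (n + 1), l k| ≤ KD * q 0 * q n := by
  set x := fun n => Qmat l p m n 0 0 1
  set y := fun n => Qmat l p m n 0 1 1
  have hx : ∀ n, x (n + 1) = x n + m (n + 1) * y n := (Qmat_succ_zero_apply l p m · 1)
  have hx0 : x 0 = m 0 := by simp [x, Qmat_self, Mmat]
  have hy0 : y 0 = l 0 := by simp [y, Qmat_self, Mmat]
  have hD := h.abs_sub_prod_le_of_second_column hx (Qmat_succ_one_apply l p m · 1) hKD hKD2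
    hsmall (hx0 ▸ h.abs_m_le 0) hy0
  have hKDq := mul_nonneg hKD (h.q_nonneg 0)
  obtain ⟨Qb2, hB, hBtail⟩ := exists_tendsto_of_rec h.q_nonneg h.q_mul_succ_le h.theta_nonneg
    h.theta_lt_one h.C_nonneg zero_le_one hKDq h.abs_m_le hx
    fun k => by
      simpa only [one_mul] using
        abs_le_of_abs_sub_prod_le h.theta_nonneg h.theta_lt_one h.abs_l_le (hD k)
  exact ⟨Qb2, hB, h.summable_abs_prod_mul, h.abs_sub_tsum_le hKDq hx hx0 hB hD,
    fun n => ⟨hBtail n, hD n⟩⟩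

end TailRegime

lemma tendsto_Qmat_apply_iff {ℓ mp mm : ℕ → ℝ} {a : ℕ} {r c : Fin 2} {f : Filter ℝ} :
    Tendsto (fun j => Qmat ℓ mp mm j a r c) atTop f ↔
      Tendsto
        (fun n => Qmat (fun k => ℓ (a + k)) (fun k => mp (a + k)) (fun k => mm (a + k)) n 0 r c)
        atTop f := by
  rw [← tendsto_add_atTop_iff_nat a]
  simp only [add_comm _ a, Qmat_add_eq_shift]

lemma prod_Icc_add_eq_prod_range {M : Type*} [CommMonoid M] (f : ℕ → M) (a n : ℕ) :
    ∏ k ∈ Icc a (a + n), f k = ∏ k ∈ range (n + 1), f (a + k) := by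
  rw [← Ico_add_one_right_eq_Icc, prod_Ico_eq_prod_range, show a + n + 1 - a = n + 1 by omega]

theorem Qmat_tail_estimates {ℓ mp mm q : ℕ → ℝ} {a : ℕ} {C θ μ K C₀ : ℝ}
    (h : TailRegime (fun n => q (a + n)) (fun n => ℓ (a + n)) (fun n => mp (a + n))
      (fun n => mm (a + n)) C θ μ)
    (hCK : C ≤ K) (hK : C * (C + C / (1 - θ) + 2) + μ * K ≤ K) (hsmall : C * K * q a ≤ 1)
    (hC₀ : C * K + K + C / (1 - θ) + 1 ≤ C₀) :
    ∃ Qb1 Qb2 : ℝ,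
      Tendsto (fun j => Qmat ℓ mp mm j a 0 0) atTop (𝓝 Qb1) ∧
      Tendsto (fun j => Qmat ℓ mp mm j a 0 1) atTop (𝓝 Qb2) ∧
      Summable (fun d => |(∏ k ∈ Ico a (a + d), ℓ k) * mm (a + d)|) ∧
      |Qb1 - 1| ≤ C₀ * q a ∧
      |Qb2 - ∑' d, (∏ k ∈ Ico a (a + d), ℓ k) * mm (a + d)| ≤ C₀ * (q a * q a) ∧
      ∀ j ≥ a,
        |Qmat ℓ mp mm j a 0 0 - Qb1| ≤ C₀ * q j ∧
        |Qmat ℓ mp mm j a 0 1 - Qb2| ≤ C₀ * q j ∧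
        |Qmat ℓ mp mm j a 1 0| ≤ C₀ * q j ∧
        |Qmat ℓ mp mm j a 1 1 - ∏ k ∈ Icc a j, ℓ k| ≤ C₀ * q a * q j := by
  have hq := h.q_nonneg
  have hK0 : 0 ≤ K := h.C_nonneg.trans hCK
  have hCθ : 0 ≤ C / (1 - θ) := div_nonneg h.C_nonneg (by linarith [h.theta_lt_one])
  have hCC : 0 ≤ C * (C + C / (1 - θ)) := mul_nonneg h.C_nonneg (by linarith [h.C_nonneg])
  have hc : C * (C + C / (1 - θ) + 2) = C * (C + C / (1 - θ)) + 2 * C := by ring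
  have hc' : C * (C + C / (1 - θ) + 2) = C * (C + C / (1 - θ) + 1) + C := by ring
  obtain ⟨Qb1, hA, hQb1, hcol1⟩ := h.Qmat_first_column hCK (by linarith) hsmall
  obtain ⟨Qb2, hB, hsum, hQb2, hcol2⟩ :=
    h.Qmat_second_column hK0 (by linarith [h.C_nonneg]) hsmall
  simp only [Nat.add_zero] at hQb1 hQb2 hcol2
  have hCK₀ : C * K ≤ C₀ := by linarith
  have hK₀ : K ≤ C₀ := by linarith [mul_nonneg h.C_nonneg hK0]
  have hB₀ : C * (1 / (1 - θ) + K * q a) ≤ C₀ := by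
    have : C * (1 / (1 - θ) + K * q a) = C / (1 - θ) + C * K * q a := by ring
    linarith [mul_nonneg h.C_nonneg hK0]
  simp only [prod_Ico_eq_prod_range, Nat.add_sub_cancel_left]
  refine ⟨Qb1, Qb2, tendsto_Qmat_apply_iff.mpr hA, tendsto_Qmat_apply_iff.mpr hB, hsum,
    hQb1.trans (mul_le_mul_of_nonneg_right hCK₀ (hq 0)),
    hQb2.trans ?_, fun j hj => ?_⟩
  · rw [show C * (K * q a) * q a = C * K * (q a * q a) by ring]
    exact mul_le_mul_of_nonneg_right hCK₀ (mul_nonneg (hq 0) (hq 0))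
  obtain ⟨n, rfl⟩ := Nat.exists_eq_add_of_le hj
  rw [Qmat_add_eq_shift, prod_Icc_add_eq_prod_range]
  exact ⟨(hcol1 n).1.trans (mul_le_mul_of_nonneg_right hCK₀ (hq n)),
    (hcol2 n).1.trans (mul_le_mul_of_nonneg_right hB₀ (hq n)),
    (hcol1 n).2.trans (mul_le_mul_of_nonneg_right hK₀ (hq n)),
    (hcol2 n).2.trans (mul_le_mul_of_nonneg_right (mul_le_mul_of_nonneg_right hK₀ (hq 0)) (hq n))⟩

noncomputable def qseq (q₁ : ℝ) (j : ℕ) : ℝ := q₁ / (1 + q₁ * ((j : ℝ) - 1))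

section qseq

variable {q₁ : ℝ}

lemma qseq_le_self (hq₁ : 0 ≤ q₁) {j : ℕ} (hj : 1 ≤ j) : qseq q₁ j ≤ q₁ := by
  have : (1 : ℝ) ≤ j := by exact_mod_cast hj
  exact div_le_self hq₁ (by nlinarith)

variable (hq₁ : 0 < q₁) (hq₁2 : q₁ ≤ 1 / 2)
include hq₁ hq₁2

lemma qseq_den_pos (j : ℕ) : 0 < 1 + q₁ * ((j : ℝ) - 1) := by
  have : (0 : ℝ) ≤ j := j.cast_nonneg
  nlinarith

lemma qseq_pos (j : ℕ) : 0 < qseq q₁ j := div_pos hq₁ (qseq_den_pos hq₁ hq₁2 j)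

lemma qseq_le_one_div (j : ℕ) : qseq q₁ j ≤ 1 / ((j : ℝ) + 1) := by
  rw [qseq, div_le_div_iff₀ (qseq_den_pos hq₁ hq₁2 j) (by positivity)]
  nlinarith

lemma qseq_mul_succ (j : ℕ) : qseq q₁ j * qseq q₁ (j + 1) = qseq q₁ j - qseq q₁ (j + 1) := by
  have h1 := qseq_den_pos hq₁ hq₁2 j
  have h2 := qseq_den_pos hq₁ hq₁2 (j + 1)
  simp only [qseq]
  push_cast at h2 ⊢
  field_simp
  ring

lemma mul_qseq_le {θ μ : ℝ} (hθ : 0 ≤ θ) {j : ℕ} (hθμ : θ * (1 + 1 / ((j : ℝ) + 1)) ≤ μ) :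
    θ * qseq q₁ j ≤ μ * qseq q₁ (j + 1) := by
  have key : (1 + qseq q₁ j) * qseq q₁ (j + 1) = qseq q₁ j := by
    linarith [qseq_mul_succ hq₁ hq₁2 j]
  have hθq : θ * (1 + qseq q₁ j) ≤ μ :=
    (mul_le_mul_of_nonneg_left (by linarith [qseq_le_one_div hq₁ hq₁2 j]) hθ).trans hθμ
  calc θ * qseq q₁ j = θ * (1 + qseq q₁ j) * qseq q₁ (j + 1) := by rw [mul_assoc, key]
    _ ≤ μ * qseq q₁ (j + 1) := mul_le_mul_of_nonneg_right hθq (qseq_pos hq₁ hq₁2 _).le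

lemma qseq_le_sqrt {j : ℕ} (hj : 1 ≤ j) : qseq q₁ j ≤ √q₁ :=
  (qseq_le_self hq₁.le hj).trans (Real.le_sqrt_self_iff.mpr (by linarith))

lemma qseq_mul_self_le_rpow {j : ℕ} (hj : 1 ≤ j) : qseq q₁ j * qseq q₁ j ≤ q₁ ^ ((3 : ℝ) / 2) :=
  calc qseq q₁ j * qseq q₁ j ≤ q₁ ^ (2 : ℝ) := by
        rw [Real.rpow_two, sq]
        exact mul_le_mul (qseq_le_self hq₁.le hj) (qseq_le_self hq₁.le hj)
          (qseq_pos hq₁ hq₁2 j).le hq₁.le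
    _ ≤ q₁ ^ ((3 : ℝ) / 2) := Real.rpow_le_rpow_of_exponent_ge hq₁ (by linarith) (by norm_num)

lemma tailRegime_qseq {ℓ mp mm : ℕ → ℝ} {C θ μ : ℝ} {a : ℕ} (ha : 1 ≤ a) (hC : 0 ≤ C)
    (hθ0 : 0 ≤ θ) (hθ1 : θ < 1) (hθμ : ∀ j ≥ a, θ * (1 + 1 / ((j : ℝ) + 1)) ≤ μ)
    (hℓ : ∀ j ≥ a, |ℓ j| ≤ θ) (hmp : ∀ j, 1 ≤ j → |mp j| ≤ C * qseq q₁ j)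
    (hmm : ∀ j, 1 ≤ j → |mm j| ≤ C * qseq q₁ j) :
    TailRegime (fun n => qseq q₁ (a + n)) (fun n => ℓ (a + n)) (fun n => mp (a + n))
      (fun n => mm (a + n)) C θ μ where
  q_nonneg _ := (qseq_pos hq₁ hq₁2 _).le
  q_mul_succ_le _ := (qseq_mul_succ hq₁ hq₁2 _).le
  theta_nonneg := hθ0
  theta_lt_one := hθ1
  theta_mul_q_le n := mul_qseq_le hq₁ hq₁2 hθ0 (hθμ _ (Nat.le_add_right a n))
  C_nonneg := hC
  abs_l_le n := hℓ _ (Nat.le_add_right a n)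
  abs_p_le n := hmp _ (by omega)
  abs_m_le n := hmm _ (by omega)

end qseq

lemma exists_tail_constants {lam C : ℝ} (hlam0 : 0 ≤ lam) (hlam : lam < 1) (hC : 0 ≤ C) :
    ∃ θ μ K : ℝ, lam < θ ∧ θ < μ ∧ μ < 1 ∧ C ≤ K ∧ C * (C + C / (1 - θ) + 2) + μ * K ≤ K := by
  obtain ⟨θ, hlamθ, hθ1⟩ := exists_between hlam
  obtain ⟨μ, hθμ, hμ1⟩ := exists_between hθ1
  have hμ : 0 < 1 - μ := by linarith
  have hc : 2 * C ≤ C * (C + C / (1 - θ) + 2) := by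
    have := div_nonneg hC (by linarith : (0 : ℝ) ≤ 1 - θ)
    nlinarith
  refine ⟨θ, μ, C * (C + C / (1 - θ) + 2) / (1 - μ), hlamθ, hθμ, hμ1, ?_, le_of_eq ?_⟩
  · rw [le_div_iff₀ hμ]
    nlinarith
  · field_simp
    ring

lemma exists_start_index {lam θ μ L c c' : ℝ} (hL : 1 < L) (hlam : lam < θ) (hθμ : θ < μ) :
    ∃ a : ℕ, 1 ≤ a ∧ c' * (1 / ((a : ℝ) + 1)) ≤ 1 ∧ ∀ j ≥ a,
      lam * (1 + c * (1 / ((j : ℝ) + 1)) + c * L ^ (-(j : ℝ) / 4)) ≤ θ ∧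
        θ * (1 + 1 / ((j : ℝ) + 1)) ≤ μ := by
  have hinv : Tendsto (fun j : ℕ => 1 / ((j : ℝ) + 1)) atTop (𝓝 0) :=
    tendsto_one_div_add_atTop_nhds_zero_nat
  have hpow : Tendsto (fun j : ℕ => L ^ (-(j : ℝ) / 4)) atTop (𝓝 0) :=
    (tendsto_rpow_atBot_of_base_gt_one L hL).comp
      ((tendsto_neg_atTop_atBot.comp tendsto_natCast_atTop_atTop).atBot_div_const (by norm_num))
  have h1 : ∀ᶠ j : ℕ in atTop,
      lam * (1 + c * (1 / ((j : ℝ) + 1)) + c * L ^ (-(j : ℝ) / 4)) < θ := by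
    refine Tendsto.eventually_lt_const hlam ?_
    simpa using (((hinv.const_mul c).const_add 1).add (hpow.const_mul c)).const_mul lam
  have h2 : ∀ᶠ j : ℕ in atTop, θ * (1 + 1 / ((j : ℝ) + 1)) < μ := by
    refine Tendsto.eventually_lt_const hθμ ?_
    simpa using (hinv.const_add 1).const_mul θ
  have h3 : ∀ᶠ j : ℕ in atTop, c' * (1 / ((j : ℝ) + 1)) < 1 := by
    refine Tendsto.eventually_lt_const one_pos ?_
    simpa using hinv.const_mul c'
  obtain ⟨a, ha⟩ := eventually_atTop.mp (h1.and (h2.and (h3.and (eventually_ge_atTop 1))))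
  exact ⟨a, (ha a le_rfl).2.2.2, (ha a le_rfl).2.2.1.le,
    fun j hj => ⟨(ha j hj).1.le, (ha j hj).2.1.le⟩⟩

end ChargeFlow

open ChargeFlow

theorem statement16_general (η : ℝ) (hη : η < 1 / 2)
    (L C : ℝ) (hL : 1 < L) (hC : 0 < C) :
    ∃ j₀ : ℕ, 1 ≤ j₀ ∧ ∃ C₀ : ℝ, 0 < C₀ ∧
      ∀ q₁ : ℝ, 0 < q₁ → q₁ ≤ 1 / 4 →
        ∀ ℓ mp mm : ℕ → ℝ,
          (∀ j : ℕ, 1 ≤ j →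
            |ℓ j| ≤ L ^ (-(2 : ℝ) * ((η - 1) ^ 2 - η ^ 2)) *
              (1 + C * (q₁ / (1 + q₁ * ((j : ℝ) - 1))) + C * L ^ (-(j : ℝ) / 4))) →
          (∀ j : ℕ, 1 ≤ j → |mp j| ≤ C * (q₁ / (1 + q₁ * ((j : ℝ) - 1)))) →
          (∀ j : ℕ, 1 ≤ j → |mm j| ≤ C * (q₁ / (1 + q₁ * ((j : ℝ) - 1)))) →
          ∃ Qb1 Qb2 : ℝ,
            Filter.Tendsto (fun j : ℕ => Qmat ℓ mp mm j j₀ 0 0)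
              Filter.atTop (nhds Qb1) ∧
            Filter.Tendsto (fun j : ℕ => Qmat ℓ mp mm j j₀ 0 1)
              Filter.atTop (nhds Qb2) ∧
            Summable (fun d : ℕ =>
              |(∏ k ∈ Finset.Ico j₀ (j₀ + d), ℓ k) * mm (j₀ + d)|) ∧
            |Qb1 - 1| ≤ C₀ * Real.sqrt q₁ ∧
            |Qb2 - ∑' d : ℕ, (∏ k ∈ Finset.Ico j₀ (j₀ + d), ℓ k) * mm (j₀ + d)|
              ≤ C₀ * q₁ ^ ((3 : ℝ) / 2) ∧
            ∀ j : ℕ, j₀ ≤ j →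
              |Qmat ℓ mp mm j j₀ 0 0 - Qb1| ≤ C₀ * (q₁ / (1 + q₁ * ((j : ℝ) - 1))) ∧
              |Qmat ℓ mp mm j j₀ 0 1 - Qb2| ≤ C₀ * (q₁ / (1 + q₁ * ((j : ℝ) - 1))) ∧
              |Qmat ℓ mp mm j j₀ 1 0| ≤ C₀ * (q₁ / (1 + q₁ * ((j : ℝ) - 1))) ∧
              |Qmat ℓ mp mm j j₀ 1 1 - ∏ k ∈ Finset.Icc j₀ j, ℓ k|
                ≤ C₀ * q₁ * (q₁ / (1 + q₁ * ((j : ℝ) - 1))) := by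
  set lam := L ^ (-(2 : ℝ) * ((η - 1) ^ 2 - η ^ 2))
  have hlam0 : 0 ≤ lam := (Real.rpow_pos_of_pos (by linarith) _).le
  obtain ⟨θ, μ, K, hlamθ, hθμ, hμ1, hCK, hK⟩ := exists_tail_constants hlam0
    (Real.rpow_lt_one_of_one_lt_of_neg hL (by nlinarith)) hC.le
  obtain ⟨a, ha1, hsmall, ha⟩ := exists_start_index (c := C) (c' := C * K) hL hlamθ hθμ
  have hC₀ : 0 < C * K + K + C / (1 - θ) + 1 := by
    have := hC.trans_le hCK
    have := div_pos hC (by linarith : (0 : ℝ) < 1 - θ)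
    positivity
  refine ⟨a, ha1, _, hC₀, fun q₁ hq₁ hq₁4 ℓ mp mm hℓ hmp hmm => ?_⟩
  have hq₁2 : q₁ ≤ 1 / 2 := by linarith
  have hℓθ : ∀ j ≥ a, |ℓ j| ≤ θ := fun j hj => by
    refine (hℓ j (ha1.trans hj)).trans (le_trans ?_ (ha j hj).1)
    gcongr _ * (1 + _ * ?_ + _)
    exact qseq_le_one_div hq₁ hq₁2 j
  obtain ⟨Qb1, Qb2, hA, hB, hsum, hQb1, hQb2, hcol⟩ := Qmat_tail_estimates
    (tailRegime_qseq hq₁ hq₁2 ha1 hC.le (hlam0.trans hlamθ.le) (by linarith)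
      (fun j hj => (ha j hj).2) hℓθ hmp hmm) hCK hK
    ((mul_le_mul_of_nonneg_left (qseq_le_one_div hq₁ hq₁2 a)
      (mul_nonneg hC.le (hC.le.trans hCK))).trans hsmall) le_rfl
  refine ⟨Qb1, Qb2, hA, hB, hsum, hQb1.trans ?_, hQb2.trans ?_, fun j hj => ?_⟩
  · exact mul_le_mul_of_nonneg_left (qseq_le_sqrt hq₁ hq₁2 ha1) hC₀.le
  · exact mul_le_mul_of_nonneg_left (qseq_mul_self_le_rpow hq₁ hq₁2 ha1) hC₀.le
  obtain ⟨h1, h2, h3, h4⟩ := hcol j hj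
  exact ⟨h1, h2, h3, h4.trans (mul_le_mul_of_nonneg_right
    (mul_le_mul_of_nonneg_left (qseq_le_self hq₁.le ha1) hC₀.le) (qseq_pos hq₁ hq₁2 j).le)⟩

/-- Convergence of the tail block `Q(j,j₀)` of the matrix product
governing the coupled flow of the two fractional-charge renormalization constants for
`0 ≤ η < 1/2` (with `η̄ = η − 1`), with quantitative error bounds. -/
theorem statement16 (η : ℝ) (hη0 : 0 ≤ η) (hη : η < 1 / 2)
    (L C : ℝ) (hL : 1 < L) (hC : 0 < C) :
    ∃ j₀ : ℕ, 1 ≤ j₀ ∧ ∃ C₀ : ℝ, 0 < C₀ ∧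
      ∀ q₁ : ℝ, 0 < q₁ → q₁ ≤ 1 / 4 →
        ∀ ℓ mp mm : ℕ → ℝ,
          (∀ j : ℕ, 1 ≤ j →
            |ℓ j| ≤ L ^ (-(2 : ℝ) * ((η - 1) ^ 2 - η ^ 2)) *
              (1 + C * (q₁ / (1 + q₁ * ((j : ℝ) - 1))) + C * L ^ (-(j : ℝ) / 4))) →
          (∀ j : ℕ, 1 ≤ j → |mp j| ≤ C * (q₁ / (1 + q₁ * ((j : ℝ) - 1)))) →
          (∀ j : ℕ, 1 ≤ j → |mm j| ≤ C * (q₁ / (1 + q₁ * ((j : ℝ) - 1)))) →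
          ∃ Qb1 Qb2 : ℝ,
            Filter.Tendsto (fun j : ℕ => Qmat ℓ mp mm j j₀ 0 0)
              Filter.atTop (nhds Qb1) ∧
            Filter.Tendsto (fun j : ℕ => Qmat ℓ mp mm j j₀ 0 1)
              Filter.atTop (nhds Qb2) ∧
            Summable (fun d : ℕ =>
              |(∏ k ∈ Finset.Ico j₀ (j₀ + d), ℓ k) * mm (j₀ + d)|) ∧
            |Qb1 - 1| ≤ C₀ * Real.sqrt q₁ ∧
            |Qb2 - ∑' d : ℕ, (∏ k ∈ Finset.Ico j₀ (j₀ + d), ℓ k) * mm (j₀ + d)|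
              ≤ C₀ * q₁ ^ ((3 : ℝ) / 2) ∧
            ∀ j : ℕ, j₀ ≤ j →
              |Qmat ℓ mp mm j j₀ 0 0 - Qb1| ≤ C₀ * (q₁ / (1 + q₁ * ((j : ℝ) - 1))) ∧
              |Qmat ℓ mp mm j j₀ 0 1 - Qb2| ≤ C₀ * (q₁ / (1 + q₁ * ((j : ℝ) - 1))) ∧
              |Qmat ℓ mp mm j j₀ 1 0| ≤ C₀ * (q₁ / (1 + q₁ * ((j : ℝ) - 1))) ∧
              |Qmat ℓ mp mm j j₀ 1 1 - ∏ k ∈ Finset.Icc j₀ j, ℓ k|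
                ≤ C₀ * q₁ * (q₁ / (1 + q₁ * ((j : ℝ) - 1))) :=
  statement16_general η hη L C hL hC
end
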